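/- arXiv:2504.00534 — 7 statements merged into one kernel-verified Lean document; each statement's English description precedes it below -/
import Mathlib

section
/- Let (𝔤, θ) be a TKK Lie algebra. Then for each j ∈ {−1, 1} and all a, x, y ∈ 𝔤: [[P_j(x), θP_j(y)], [[P_j(x), θP_j(a)], P_j(x)]] = [[P_j(x), [[θP_j(y), P_j(x)], θP_j(a)]], P_j(x)]. -/
/-- A Tits–Kantor–Koecher (TKK) Lie algebra: a complex Lie algebra `L` with a
3-grading `L = L₋₁ ⊕ L₀ ⊕ L₁` encoded by the projections `P j` onto the
graded components (with `P j = 0` for `j ∉ {-1,0,1}`), together with a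
negatively graded conjugate-linear involution `θ` preserving the bracket. -/
structure TKK (L : Type*) [LieRing L] [LieAlgebra ℂ L] where
  /-- the projection onto the `j`-th graded component -/
  P : ℤ → L →ₗ[ℂ] L
  /-- the involution -/
  θ : L → L
  θ_add : ∀ x y : L, θ (x + y) = θ x + θ y
  θ_smul : ∀ (c : ℂ) (x : L), θ (c • x) = (starRingEnd ℂ c) • θ x
  θ_invol : ∀ x : L, θ (θ x) = x
  θ_bracket : ∀ x y : L, θ ⁅x, y⁆ = ⁅θ x, θ y⁆
  P_outside : ∀ j : ℤ, j ≠ -1 → j ≠ 0 → j ≠ 1 → P j = 0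
  P_sum : ∀ x : L, P (-1) x + P 0 x + P 1 x = x
  P_comp : ∀ (i j : ℤ) (x : L), P i (P j x) = if i = j then P j x else 0
  P_bracket : ∀ (i j : ℤ) (x y : L), P (i + j) ⁅P i x, P j y⁆ = ⁅P i x, P j y⁆
  P_bracket_ne : ∀ (i j k : ℤ), k ≠ i + j → ∀ x y : L, P k ⁅P i x, P j y⁆ = 0
  θ_P : ∀ (j : ℤ) (x : L), θ (P j x) = P (-j) (θ x)

namespace TKK

variable {L : Type*} [LieRing L] [LieAlgebra ℂ L]

/-- `z ∈ 𝔤_{±1}`, i.e. the `𝔤₀`-component of `z` vanishes. -/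
def pm (g : TKK L) (z : L) : Prop := g.P 0 z = 0

/-- `z` is a tripotent: `⁅⁅z, θz⁆, z⁆ = z`. -/
def IsTripotent (g : TKK L) (z : L) : Prop := ⁅⁅z, g.θ z⁆, z⁆ = z

/-- `z ∈ 𝒰_s(𝔤_{±1})`: `z` is a tripotent in `𝔤_{±1}` whose graded components
satisfy the tripotent identity componentwise. -/
def Us (g : TKK L) (z : L) : Prop :=
  g.pm z ∧ g.IsTripotent z ∧
    ∀ j : ℤ, j = -1 ∨ j = 1 → ⁅⁅g.P j z, g.θ (g.P j z)⁆, g.P j z⁆ = g.P j z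

/-- Orthogonality of elements of `𝔤_{±1}`: `⁅P j z, θ (P j w)⁆ = 0` for `j = -1, 1`. -/
def Orth (g : TKK L) (z w : L) : Prop :=
  ∀ j : ℤ, j = -1 ∨ j = 1 → ⁅g.P j z, g.θ (g.P j w)⁆ = 0

/-- The partial order on `𝒰_s(𝔤_{±1})`: `z ≤ w` iff `w - z ∈ 𝒰_s(𝔤_{±1})`
and `w - z ⊥ z`. -/
def Le (g : TKK L) (z w : L) : Prop := g.Us (w - z) ∧ g.Orth (w - z) z

end TKK

section TkkAux

variable {L : Type*} [LieRing L] [LieAlgebra ℂ L]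

/-- Brackets of homogeneous elements whose degrees sum outside `{-1,0,1}` vanish. -/
lemma tkk_bracket_zero (g : TKK L) {i i' : ℤ} {u v : L}
    (hu : g.P i u = u) (hv : g.P i' v = v)
    (h1 : i + i' ≠ -1) (h2 : i + i' ≠ 0) (h3 : i + i' ≠ 1) : ⁅u, v⁆ = 0 := by
  have hs := g.P_sum ⁅u, v⁆
  have hz : ∀ k : ℤ, k ≠ i + i' → g.P k ⁅u, v⁆ = 0 := by
    intro k hk
    have := g.P_bracket_ne i i' k hk u v
    rwa [hu, hv] at this
  rw [hz (-1) (fun h => h1 h.symm), hz 0 (fun h => h2 h.symm),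
    hz 1 (fun h => h3 h.symm)] at hs
  simpa using hs.symm

/-- Brackets of homogeneous elements are homogeneous. -/
lemma tkk_P_bracket' (g : TKK L) {i i' : ℤ} {u v : L}
    (hu : g.P i u = u) (hv : g.P i' v = v) :
    g.P (i + i') ⁅u, v⁆ = ⁅u, v⁆ := by
  have := g.P_bracket i i' u v
  rwa [hu, hv] at this

/-- Key abstract Lie-algebra identity, given the graded vanishing facts. -/
lemma tkk_key {X Y A : L}
    (h1 : ⁅Y, A⁆ = 0) (h2 : ⁅X, ⁅X, ⁅X, Y⁆⁆⁆ = 0) (h3 : ⁅X, ⁅X, ⁅X, A⁆⁆⁆ = 0) :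
    ⁅⁅X, Y⁆, ⁅⁅X, A⁆, X⁆⁆ = ⁅⁅X, ⁅⁅Y, X⁆, A⁆⁆, X⁆ := by
  have sAY : ⁅A, Y⁆ = -⁅Y, A⁆ := by rw [← lie_skew]
  set u := ⁅X, ⁅⁅X, Y⁆, ⁅X, A⁆⁆⁆ with hu
  set t := ⁅⁅X, Y⁆, ⁅X, ⁅X, A⁆⁆⁆ - ⁅⁅X, A⁆, ⁅X, ⁅X, Y⁆⁆⁆ with ht
  have stepA : t = u := by
    rw [ht, hu, leibniz_lie X ⁅X, Y⁆ ⁅X, A⁆]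
    rw [show ⁅⁅X, ⁅X, Y⁆⁆, ⁅X, A⁆⁆ = -⁅⁅X, A⁆, ⁅X, ⁅X, Y⁆⁆⁆ from (lie_skew _ _).symm]
    abel
  have f1 : ⁅A, ⁅X, Y⁆⁆ = ⁅Y, ⁅X, A⁆⁆ := by
    rw [leibniz_lie A X Y, sAY, h1, neg_zero, lie_zero, add_zero,
      show ⁅⁅A, X⁆, Y⁆ = -⁅Y, ⁅A, X⁆⁆ from (lie_skew _ _).symm,
      show ⁅A, X⁆ = -⁅X, A⁆ from by rw [← lie_skew], lie_neg, neg_neg]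
  have f2 : ⁅A, ⁅X, ⁅X, Y⁆⁆⁆ = ⁅X, ⁅Y, ⁅X, A⁆⁆⁆ + ⁅X, ⁅Y, ⁅X, A⁆⁆⁆ - ⁅Y, ⁅X, ⁅X, A⁆⁆⁆ := by
    have sk : ⁅⁅A, X⁆, ⁅X, Y⁆⁆ = -⁅⁅Y, X⁆, ⁅X, A⁆⁆ := by
      rw [show ⁅A, X⁆ = -⁅X, A⁆ from by rw [← lie_skew],
        show ⁅Y, X⁆ = -⁅X, Y⁆ from by rw [← lie_skew], neg_lie, neg_lie, neg_neg]
      exact (lie_skew _ _)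
    rw [leibniz_lie A X ⁅X, Y⁆, f1, sk, leibniz_lie Y X ⁅X, A⁆]
    abel
  have tC : ⁅⁅X, Y⁆, ⁅X, ⁅X, A⁆⁆⁆ = -u + ⁅X, ⁅X, ⁅⁅Y, X⁆, A⁆⁆⁆ := by
    rw [hu]
    simp only [lie_lie, lie_sub, sub_lie, lie_add, add_lie, lie_neg, neg_lie,
      sAY, h1, h2, h3, lie_zero, zero_lie, neg_zero, sub_zero, zero_sub, neg_neg]
    abel
  have tD : ⁅⁅X, A⁆, ⁅X, ⁅X, Y⁆⁆⁆ = u + ⁅X, ⁅X, ⁅⁅Y, X⁆, A⁆⁆⁆ := by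
    rw [hu]
    simp only [f2, lie_lie, lie_sub, sub_lie, lie_add, add_lie, lie_neg, neg_lie,
      sAY, h1, h2, h3, lie_zero, zero_lie, neg_zero, sub_zero, zero_sub, neg_neg]
    abel
  have stepB : t = -(u + u) := by rw [ht, tC, tD]; abel
  have hu0 : u = 0 := by
    have h' : u = -(u + u) := stepA.symm.trans stepB
    have hsum : u + (u + u) = 0 := eq_neg_iff_add_eq_zero.mp h'
    have h3u : (3 : ℂ) • u = 0 := by
      rw [show (3 : ℂ) • u = u + (u + u) from by module]; exact hsum
    rcases smul_eq_zero.mp h3u with h | h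
    · norm_num at h
    · exact h
  have ht0 : t = 0 := stepA.trans hu0
  have heq : ⁅⁅X, Y⁆, ⁅X, ⁅X, A⁆⁆⁆ = ⁅⁅X, A⁆, ⁅X, ⁅X, Y⁆⁆⁆ := by
    have h' := ht0
    rw [ht] at h'
    exact sub_eq_zero.mp h'
  have e1 : ⁅⁅Y, X⁆, A⁆ = ⁅Y, ⁅X, A⁆⁆ := by
    rw [lie_lie, h1, lie_zero, sub_zero]
  have p2 : ⁅⁅Y, ⁅X, ⁅X, A⁆⁆⁆, X⁆ = -⁅⁅X, Y⁆, ⁅X, ⁅X, A⁆⁆⁆ := by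
    rw [show ⁅⁅Y, ⁅X, ⁅X, A⁆⁆⁆, X⁆ = -⁅X, ⁅Y, ⁅X, ⁅X, A⁆⁆⁆⁆ from (lie_skew _ _).symm,
      leibniz_lie X Y ⁅X, ⁅X, A⁆⁆, h3, lie_zero, add_zero]
  rw [leibniz_lie ⁅X, Y⁆ ⁅X, A⁆ X, e1, leibniz_lie X Y ⁅X, A⁆, add_lie, p2,
    show ⁅⁅X, Y⁆, X⁆ = -⁅X, ⁅X, Y⁆⁆ from (lie_skew _ _).symm, lie_neg, heq]

end TkkAux

/-- Lemma (TKK Jordan triple identity, special case) for TKK Lie algebras: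
for `j = -1, 1` and all `a, x, y ∈ 𝔤`,
`⁅⁅P_j x, θ P_j y⁆, ⁅⁅P_j x, θ P_j a⁆, P_j x⁆⁆ = ⁅⁅P_j x, ⁅⁅θ P_j y, P_j x⁆, θ P_j a⁆⁆, P_j x⁆`. -/
theorem tkk_bracket_identity {L : Type*} [LieRing L] [LieAlgebra ℂ L] (g : TKK L)
    (j : ℤ) (hj : j = -1 ∨ j = 1) (a x y : L) :
    ⁅⁅g.P j x, g.θ (g.P j y)⁆, ⁅⁅g.P j x, g.θ (g.P j a)⁆, g.P j x⁆⁆ =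
      ⁅⁅g.P j x, ⁅⁅g.θ (g.P j y), g.P j x⁆, g.θ (g.P j a)⁆⁆, g.P j x⁆ := by
  have hX : g.P j (g.P j x) = g.P j x := by rw [g.P_comp]; simp
  have hY : g.P (-j) (g.θ (g.P j y)) = g.θ (g.P j y) := by
    rw [g.θ_P j y, g.P_comp]; simp
  have hA : g.P (-j) (g.θ (g.P j a)) = g.θ (g.P j a) := by
    rw [g.θ_P j a, g.P_comp]; simp
  have h1 : ⁅g.θ (g.P j y), g.θ (g.P j a)⁆ = 0 :=
    tkk_bracket_zero g hY hA
      (by rcases hj with rfl | rfl <;> decide)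
      (by rcases hj with rfl | rfl <;> decide)
      (by rcases hj with rfl | rfl <;> decide)
  have hXY : g.P (j + -j) ⁅g.P j x, g.θ (g.P j y)⁆ = ⁅g.P j x, g.θ (g.P j y)⁆ :=
    tkk_P_bracket' g hX hY
  have hXXY : g.P (j + (j + -j)) ⁅g.P j x, ⁅g.P j x, g.θ (g.P j y)⁆⁆ =
      ⁅g.P j x, ⁅g.P j x, g.θ (g.P j y)⁆⁆ :=
    tkk_P_bracket' g hX hXY
  have h2 : ⁅g.P j x, ⁅g.P j x, ⁅g.P j x, g.θ (g.P j y)⁆⁆⁆ = 0 :=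
    tkk_bracket_zero g hX hXXY
      (by rcases hj with rfl | rfl <;> decide)
      (by rcases hj with rfl | rfl <;> decide)
      (by rcases hj with rfl | rfl <;> decide)
  have hXA : g.P (j + -j) ⁅g.P j x, g.θ (g.P j a)⁆ = ⁅g.P j x, g.θ (g.P j a)⁆ :=
    tkk_P_bracket' g hX hA
  have hXXA : g.P (j + (j + -j)) ⁅g.P j x, ⁅g.P j x, g.θ (g.P j a)⁆⁆ =
      ⁅g.P j x, ⁅g.P j x, g.θ (g.P j a)⁆⁆ :=
    tkk_P_bracket' g hX hXA
  have h3 : ⁅g.P j x, ⁅g.P j x, ⁅g.P j x, g.θ (g.P j a)⁆⁆⁆ = 0 :=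
    tkk_bracket_zero g hX hXXA
      (by rcases hj with rfl | rfl <;> decide)
      (by rcases hj with rfl | rfl <;> decide)
      (by rcases hj with rfl | rfl <;> decide)
  exact tkk_key h1 h2 h3
end

section
/- Let (𝔤, θ) be a TKK Lie algebra and let z, w ∈ 𝒰_s(𝔤_{±1}) with z ⊥ w. Then for each j = −1, 1, the element P_j(z) + θP_j(w) belongs to 𝒰_s(𝔤_{±1}). -/
/-- If `z, w ∈ 𝒰_s(𝔤_{±1})` are orthogonal, then `P j z + θ (P j w) ∈ 𝒰_s(𝔤_{±1})`
for `j = -1, 1`. -/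
theorem sum_with_theta_Us {L : Type*} [LieRing L] [LieAlgebra ℂ L] (g : TKK L)
    (z w : L) (hz : g.Us z) (hw : g.Us w) (h : g.Orth z w)
    (j : ℤ) (hj : j = -1 ∨ j = 1) :
    g.Us (g.P j z + g.θ (g.P j w)) := by

  have hθ0 : g.θ 0 = (0 : L) := by
    have h0 := g.θ_smul 0 0
    simpa using h0
  obtain ⟨hzpm, hztri, hzc⟩ := hz
  obtain ⟨hwpm, hwtri, hwc⟩ := hw
  set u := g.P j z with hu
  set v := g.θ (g.P j w) with hv
  have hjj : j + j ≠ -1 ∧ j + j ≠ 0 ∧ j + j ≠ 1 := by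
    rcases hj with h' | h' <;> subst h' <;> omega
  have hzw : ⁅g.P j z, g.P j w⁆ = (0 : L) := by
    have h1 := g.P_bracket j j z w
    rw [g.P_outside (j + j) hjj.1 hjj.2.1 hjj.2.2] at h1
    simpa using h1.symm
  have hwz : ⁅g.P j w, g.P j z⁆ = (0 : L) := by
    rw [← lie_skew, hzw, neg_zero]
  have hθv : g.θ v = g.P j w := g.θ_invol _
  have hvP : v = g.P (-j) (g.θ w) := g.θ_P j w
  have huv : ⁅u, v⁆ = (0 : L) := h j hj
  have hvu : ⁅v, u⁆ = (0 : L) := by rw [← lie_skew, huv, neg_zero]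
  have huθv : ⁅u, g.θ v⁆ = (0 : L) := by rw [hθv]; exact hzw
  have hθvu : ⁅g.θ v, u⁆ = (0 : L) := by rw [← lie_skew, huθv, neg_zero]
  have hθuv : ⁅g.θ u, v⁆ = (0 : L) := by
    rw [hu, hv, ← g.θ_bracket, hzw, hθ0]
  have hvθu : ⁅v, g.θ u⁆ = (0 : L) := by rw [← lie_skew, hθuv, neg_zero]
  have hjne : j ≠ -j ∧ j ≠ 0 := by rcases hj with h' | h' <;> subst h' <;> omega
  have hPju : g.P j u = u := by
    rw [hu, g.P_comp]; simp
  have hPjv : g.P j v = 0 := by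
    rw [hvP, g.P_comp, if_neg hjne.1]
  have hPnju : g.P (-j) u = 0 := by
    rw [hu, g.P_comp, if_neg (by omega : -j ≠ j)]
  have hPnjv : g.P (-j) v = v := by
    rw [hvP, g.P_comp, if_pos rfl]
  have hP0u : g.P 0 u = 0 := by
    rw [hu, g.P_comp, if_neg (by omega : (0:ℤ) ≠ j)]
  have hP0v : g.P 0 v = 0 := by
    rw [hvP, g.P_comp, if_neg (by omega : (0:ℤ) ≠ -j)]
  have htu : ⁅⁅u, g.θ u⁆, u⁆ = u := hzc j hj
  have htv : ⁅⁅v, g.θ v⁆, v⁆ = v := by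
    have h2 := congrArg g.θ (hwc j hj)
    rw [g.θ_bracket, g.θ_bracket, g.θ_invol] at h2
    rw [hθv]
    exact h2
  have hbr : ⁅u + v, g.θ (u + v)⁆ = ⁅u, g.θ u⁆ + ⁅v, g.θ v⁆ := by
    simp only [g.θ_add, lie_add, add_lie, huθv, hvθu]
    abel
  have c1 : ⁅⁅u, g.θ u⁆, v⁆ = (0 : L) := by
    rw [lie_lie, hθuv, huv]
    simp
  have c2 : ⁅⁅v, g.θ v⁆, u⁆ = (0 : L) := by
    rw [lie_lie, hθvu, hvu]
    simp
  refine ⟨?_, ?_, ?_⟩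
  · show g.P 0 (u + v) = 0
    rw [map_add, hP0u, hP0v, add_zero]
  · show ⁅⁅u + v, g.θ (u + v)⁆, u + v⁆ = u + v
    simp only [hbr, lie_add, add_lie, c1, c2, htu, htv]
    abel
  · intro k hk
    have hk' : k = j ∨ k = -j := by
      rcases hj with h' | h' <;> rcases hk with h'' | h'' <;> omega
    have hPk : g.P k (u + v) = if k = j then u else v := by
      rcases hk' with h' | h' <;> subst h'
      · rw [map_add, hPju, hPjv, add_zero, if_pos rfl]
      · rw [map_add, hPnju, hPnjv, zero_add, if_neg hjne.1.symm]
    rcases hk' with h' | h' <;> subst h'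
    · rw [hPk, if_pos rfl]; exact htu
    · rw [hPk, if_neg (fun hh => hjne.1 hh.symm)]; exact htv
end

section
/- Let (𝔤, θ) be a TKK Lie algebra and let z, w ∈ 𝔤_{±1} be such that w satisfies [[P_j(w), θP_j(w)], P_j(w)] = P_j(w) for j = −1, 1, and such that [[P_j(w), θP_j(w)], P_j(z)] = 0 for j = −1, 1. Then w ⊥ z, i.e. [P_j(w), θP_j(z)] = 0 for j = −1, 1. -/
private lemma aux_lie_zero {L : Type*} [LieRing L] [LieAlgebra ℂ L] (e f y : L)
    (he : ⁅⁅e, f⁆, e⁆ = e) (hy : ⁅⁅e, f⁆, y⁆ = 0) (hyf : ⁅y, f⁆ = 0)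
    (h2 : ⁅e, ⁅e, ⁅e, y⁆⁆⁆ = 0) : ⁅e, y⁆ = 0 := by
  have hfy : ⁅f, y⁆ = 0 := by rw [← lie_skew, hyf, neg_zero]
  have hu : ⁅⁅e, f⁆, ⁅e, y⁆⁆ = ⁅e, y⁆ := by
    rw [leibniz_lie, he, hy, lie_zero, add_zero]
  have hfu : ⁅f, ⁅e, y⁆⁆ = 0 := by
    rw [leibniz_lie, hfy, lie_zero, add_zero, ← lie_skew f e, neg_lie, hy, neg_zero]
  have hfu1 : ⁅f, ⁅e, ⁅e, y⁆⁆⁆ = -⁅e, y⁆ := by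
    rw [leibniz_lie, hfu, lie_zero, add_zero, ← lie_skew f e, neg_lie, hu]
  have hu1 : ⁅⁅e, f⁆, ⁅e, ⁅e, y⁆⁆⁆ = ⁅e, ⁅e, y⁆⁆ + ⁅e, ⁅e, y⁆⁆ := by
    rw [leibniz_lie, he, hu]
  have key : ⁅e, ⁅f, ⁅e, ⁅e, y⁆⁆⁆⁆ = ⁅e, ⁅e, y⁆⁆ + ⁅e, ⁅e, y⁆⁆ := by
    rw [leibniz_lie, hu1, h2, lie_zero, add_zero]
  rw [hfu1, lie_neg] at key
  -- key : -⁅e, ⁅e, y⁆⁆ = ⁅e, ⁅e, y⁆⁆ + ⁅e, ⁅e, y⁆⁆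
  have h3 : (3 : ℂ) • ⁅e, ⁅e, y⁆⁆ = 0 := by
    have : ⁅e, ⁅e, y⁆⁆ + ⁅e, ⁅e, y⁆⁆ + ⁅e, ⁅e, y⁆⁆ = 0 := by
      rw [← key]; abel
    rw [show (3 : ℂ) = 1 + 1 + 1 by norm_num, add_smul, add_smul, one_smul]
    exact this
  have hzero1 : ⁅e, ⁅e, y⁆⁆ = 0 := by
    have := smul_eq_zero.mp h3
    rcases this with h | h
    · norm_num at h
    · exact h
  have : ⁅f, ⁅e, ⁅e, y⁆⁆⁆ = 0 := by rw [hzero1, lie_zero]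
  rw [hfu1] at this
  simpa using congrArg Neg.neg this

/-- If `z, w ∈ 𝔤_{±1}`, `w` satisfies the componentwise tripotent identities and
`⁅⁅P j w, θ P j w⁆, P j z⁆ = 0` for `j = -1, 1`, then `w ⊥ z`. -/
theorem orth_of_double_bracket_zero {L : Type*} [LieRing L] [LieAlgebra ℂ L]
    (g : TKK L) (z w : L) (hz : g.pm z) (hw : g.pm w)
    (hwstrict : ∀ j : ℤ, j = -1 ∨ j = 1 →
      ⁅⁅g.P j w, g.θ (g.P j w)⁆, g.P j w⁆ = g.P j w)
    (hzero : ∀ j : ℤ, j = -1 ∨ j = 1 →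
      ⁅⁅g.P j w, g.θ (g.P j w)⁆, g.P j z⁆ = 0) :
    g.Orth w z := by
  intro j hj
  have hθ0 : g.θ 0 = 0 := by simpa using g.θ_smul 0 0
  have he : ⁅⁅g.P j w, g.θ (g.P j w)⁆, g.P j w⁆ = g.P j w := hwstrict j hj
  have hx : ⁅⁅g.P j w, g.θ (g.P j w)⁆, g.P j z⁆ = 0 := hzero j hj
  have hinv : g.θ (g.θ (g.P j w)) = g.P j w := g.θ_invol _
  have hy : ⁅⁅g.P j w, g.θ (g.P j w)⁆, g.θ (g.P j z)⁆ = 0 := by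
    have h1 := congrArg g.θ hx
    rw [hθ0, g.θ_bracket, g.θ_bracket, hinv] at h1
    -- h1 : ⁅⁅θ(P j w), P j w⁆, θ(P j z)⁆ = 0
    rw [← lie_skew (g.θ (g.P j w)) (g.P j w), neg_lie, neg_eq_zero] at h1
    exact h1
  have hPout2 : g.P (j + j) = 0 := by
    rcases hj with h | h <;> subst h <;>
      exact g.P_outside _ (by norm_num) (by norm_num) (by norm_num)
  have hPoutm2 : g.P (-j + -j) = 0 := by
    rcases hj with h | h <;> subst h <;>
      exact g.P_outside _ (by norm_num) (by norm_num) (by norm_num)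
  have hyP : g.θ (g.P j z) = g.P (-j) (g.θ z) := g.θ_P j z
  have hfP : g.θ (g.P j w) = g.P (-j) (g.θ w) := g.θ_P j w
  have hyf : ⁅g.θ (g.P j z), g.θ (g.P j w)⁆ = 0 := by
    rw [hyP, hfP, ← g.P_bracket (-j) (-j) (g.θ z) (g.θ w), hPoutm2,
      LinearMap.zero_apply]
  have hu0 : g.P 0 ⁅g.P j w, g.θ (g.P j z)⁆ = ⁅g.P j w, g.θ (g.P j z)⁆ := by
    rw [hyP]
    have h1 := g.P_bracket j (-j) w (g.θ z)
    rwa [add_neg_cancel] at h1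
  have hu1 : g.P j ⁅g.P j w, ⁅g.P j w, g.θ (g.P j z)⁆⁆
      = ⁅g.P j w, ⁅g.P j w, g.θ (g.P j z)⁆⁆ := by
    conv_lhs => rw [← hu0]
    conv_rhs => rw [← hu0]
    have h1 := g.P_bracket j 0 w ⁅g.P j w, g.θ (g.P j z)⁆
    rwa [add_zero] at h1
  have h2 : ⁅g.P j w, ⁅g.P j w, ⁅g.P j w, g.θ (g.P j z)⁆⁆⁆ = 0 := by
    conv_lhs => rw [← hu1]
    rw [← g.P_bracket j j w ⁅g.P j w, ⁅g.P j w, g.θ (g.P j z)⁆⁆, hPout2,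
      LinearMap.zero_apply]
  exact aux_lie_zero (g.P j w) (g.θ (g.P j w)) (g.θ (g.P j z)) he hy hyf h2
end

section
/- Let (𝔤, θ) be a TKK Lie algebra and let w ∈ 𝒰_s(𝔤_{±1}). Then w ⊥ θw; that is, [P_j(w), θP_j(θw)] = 0 for j = −1, 1. -/
section Aux

variable {L : Type*} [LieRing L] [LieAlgebra ℂ L]

lemma TKK.theta_zero (g : TKK L) : g.θ 0 = 0 := by
  have h := g.θ_smul 0 0
  simpa using h

lemma TKK.deg_theta (g : TKK L) {j : ℤ} {x : L} (hx : g.P j x = x) :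
    g.P (-j) (g.θ x) = g.θ x := by
  have h := g.θ_P j x
  rw [hx] at h
  exact h.symm

lemma TKK.comp_ne (g : TKK L) {i j : ℤ} (h : i ≠ j) {x : L} (hx : g.P j x = x) :
    g.P i x = 0 := by
  have hc := g.P_comp i j x
  rw [if_neg h, hx] at hc
  exact hc

lemma TKK.deg_bracket (g : TKK L) {i j : ℤ} {x y : L} (hx : g.P i x = x)
    (hy : g.P j y = y) : g.P (i + j) ⁅x, y⁆ = ⁅x, y⁆ := by
  have h := g.P_bracket i j x y
  rw [hx, hy] at h
  exact h

lemma TKK.bracket_eq_zero (g : TKK L) {i j : ℤ} {x y : L} (hx : g.P i x = x)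
    (hy : g.P j y = y) (h1 : i + j ≠ -1) (h2 : i + j ≠ 0) (h3 : i + j ≠ 1) :
    ⁅x, y⁆ = 0 := by
  have h := g.deg_bracket hx hy
  rw [g.P_outside _ h1 h2 h3] at h
  simpa using h.symm

/-- An `sl₂`-style descent: if `x` has `⁅e,a⁆`-weight `-1`, is killed by `e`,
and the triple `a`-descent of `x` vanishes, then `x = 0`. -/
lemma sl2_kill (e a x : L)
    (hea : ⁅⁅e, a⁆, a⁆ = -a) (hex : ⁅e, x⁆ = 0) (hhx : ⁅⁅e, a⁆, x⁆ = -x)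
    (hav : ⁅a, ⁅a, ⁅a, x⁆⁆⁆ = 0) : x = 0 := by
  have hev1 : ⁅e, ⁅a, x⁆⁆ = -x := by
    rw [leibniz_lie, hhx, hex, lie_zero, add_zero]
  have hHv1 : ⁅⁅e, a⁆, ⁅a, x⁆⁆ = (-2 : ℂ) • ⁅a, x⁆ := by
    rw [leibniz_lie, hea, hhx, neg_lie, lie_neg]
    module
  have hev2 : ⁅e, ⁅a, ⁅a, x⁆⁆⁆ = (-3 : ℂ) • ⁅a, x⁆ := by
    rw [leibniz_lie, hHv1, hev1, lie_neg]
    module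
  have hHv2 : ⁅⁅e, a⁆, ⁅a, ⁅a, x⁆⁆⁆ = (-3 : ℂ) • ⁅a, ⁅a, x⁆⁆ := by
    rw [leibniz_lie, hea, hHv1, neg_lie, lie_smul]
    module
  have h6 : (-6 : ℂ) • ⁅a, ⁅a, x⁆⁆ = 0 := by
    have h0 : ⁅e, ⁅a, ⁅a, ⁅a, x⁆⁆⁆⁆ = 0 := by rw [hav, lie_zero]
    rw [leibniz_lie, hHv2, hev2, lie_smul] at h0
    calc (-6 : ℂ) • ⁅a, ⁅a, x⁆⁆
        = (-3 : ℂ) • ⁅a, ⁅a, x⁆⁆ + (-3 : ℂ) • ⁅a, ⁅a, x⁆⁆ := by module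
      _ = 0 := h0
  have hv2 : ⁅a, ⁅a, x⁆⁆ = 0 := by
    rcases smul_eq_zero.mp h6 with h | h
    · norm_num at h
    · exact h
  have hv1 : ⁅a, x⁆ = 0 := by
    have h0 : (-3 : ℂ) • ⁅a, x⁆ = 0 := by rw [← hev2, hv2, lie_zero]
    rcases smul_eq_zero.mp h0 with h | h
    · norm_num at h
    · exact h
  have h0 : (0 : L) = -x := by rw [← hev1, hv1, lie_zero]
  simpa using h0.symm

end Aux

/-- Every `w ∈ 𝒰_s(𝔤_{±1})` is orthogonal to `θ w`. -/
theorem orth_theta_self {L : Type*} [LieRing L] [LieAlgebra ℂ L] (g : TKK L)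
    (w : L) (hw : g.Us w) : g.Orth w (g.θ w) := by
  obtain ⟨h0, htrip, hcomp⟩ := hw
  have h0' : g.P 0 w = 0 := h0
  have htrip' : ⁅⁅w, g.θ w⁆, w⁆ = w := htrip
  obtain ⟨a, ha⟩ : ∃ x, g.P (-1) w = x := ⟨_, rfl⟩
  obtain ⟨b, hb⟩ : ∃ x, g.P 1 w = x := ⟨_, rfl⟩
  obtain ⟨e, he⟩ : ∃ x, g.θ a = x := ⟨_, rfl⟩
  obtain ⟨c, hc⟩ : ∃ x, g.θ b = x := ⟨_, rfl⟩
  have hPa : g.P (-1) a = a := by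
    rw [← ha]; simpa using g.P_comp (-1) (-1) w
  have hPb : g.P 1 b = b := by
    rw [← hb]; simpa using g.P_comp 1 1 w
  have hPe : g.P 1 e = e := by
    rw [← he]; simpa using g.deg_theta hPa
  have hPc : g.P (-1) c = c := by
    rw [← hc]; simpa using g.deg_theta hPb
  have hθe : g.θ e = a := by rw [← he, g.θ_invol]
  have hθc : g.θ c = b := by rw [← hc, g.θ_invol]
  have hsum : a + b = w := by
    have h := g.P_sum w
    rw [h0', ha, hb] at h
    simpa using h
  have hθw : g.θ w = e + c := by rw [← hsum, g.θ_add, he, hc]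
  -- degree ±2 brackets vanish
  have hac : ⁅a, c⁆ = 0 :=
    g.bracket_eq_zero hPa hPc (by norm_num) (by norm_num) (by norm_num)
  have hbe2 : ⁅b, e⁆ = 0 :=
    g.bracket_eq_zero hPb hPe (by norm_num) (by norm_num) (by norm_num)
  -- componentwise tripotency
  have t_a : ⁅⁅a, e⁆, a⁆ = a := by
    have h := hcomp (-1) (Or.inl rfl)
    rwa [ha, he] at h
  have t_b : ⁅⁅b, c⁆, b⁆ = b := by
    have h := hcomp 1 (Or.inr rfl)
    rwa [hb, hc] at h
  -- expand full tripotency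
  have hweq : ⁅w, g.θ w⁆ = ⁅a, e⁆ + ⁅b, c⁆ := by
    rw [hθw, ← hsum]
    simp only [add_lie, lie_add, hac, hbe2, add_zero, zero_add]
  have hexp : a + ⁅⁅a, e⁆, b⁆ + (⁅⁅b, c⁆, a⁆ + b) = a + b := by
    have h := htrip'
    rw [hweq, ← hsum, add_lie, lie_add, lie_add, t_a, t_b] at h
    exact h
  -- degree bookkeeping
  have h0ae : g.P 0 ⁅a, e⁆ = ⁅a, e⁆ := by simpa using g.deg_bracket hPa hPe
  have h0bc : g.P 0 ⁅b, c⁆ = ⁅b, c⁆ := by simpa using g.deg_bracket hPb hPc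
  have hX1 : g.P 1 ⁅⁅a, e⁆, b⁆ = ⁅⁅a, e⁆, b⁆ := by
    simpa using g.deg_bracket h0ae hPb
  have hYm : g.P (-1) ⁅⁅b, c⁆, a⁆ = ⁅⁅b, c⁆, a⁆ := by
    simpa using g.deg_bracket h0bc hPa
  -- cross relations
  have cross1 : ⁅⁅a, e⁆, b⁆ = 0 := by
    have h := congrArg (g.P 1) hexp
    simp only [map_add] at h
    rw [hX1, hPb, g.comp_ne (by norm_num : (1:ℤ) ≠ -1) hPa,
      g.comp_ne (by norm_num : (1:ℤ) ≠ -1) hYm] at h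
    simp only [zero_add] at h
    exact add_eq_right.mp h
  have cross2 : ⁅⁅b, c⁆, a⁆ = 0 := by
    have h := congrArg (g.P (-1)) hexp
    simp only [map_add] at h
    rw [hYm, hPa, g.comp_ne (by norm_num : (-1:ℤ) ≠ 1) hPb,
      g.comp_ne (by norm_num : (-1:ℤ) ≠ 1) hX1] at h
    simp only [add_zero] at h
    exact add_eq_left.mp h
  -- θ-transported relations
  have r5 : ⁅⁅b, c⁆, e⁆ = 0 := by
    have h := congrArg g.θ cross2
    rw [g.θ_bracket, g.θ_bracket, hc, hθc, he, g.theta_zero] at h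
    -- h : ⁅⁅c, b⁆, e⁆ = 0
    rw [← lie_skew b c, neg_lie, h, neg_zero]
  have heb : ⁅⁅e, a⁆, b⁆ = 0 := by
    rw [← lie_skew e a, neg_lie, cross1, neg_zero]
  have hea : ⁅⁅e, a⁆, a⁆ = -a := by
    rw [← lie_skew e a, neg_lie, t_a]
  have hek : ⁅⁅e, a⁆, ⁅b, a⁆⁆ = -⁅b, a⁆ := by
    rw [leibniz_lie, heb, zero_lie, zero_add, hea, lie_neg]
  -- the element x = ⁅⁅b,a⁆,b⁆ dies by the sl₂ argument
  have h0k : g.P 0 ⁅b, a⁆ = ⁅b, a⁆ := by simpa using g.deg_bracket hPb hPa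
  have hPx : g.P 1 ⁅⁅b, a⁆, b⁆ = ⁅⁅b, a⁆, b⁆ := by
    simpa using g.deg_bracket h0k hPb
  have hex : ⁅e, ⁅⁅b, a⁆, b⁆⁆ = 0 :=
    g.bracket_eq_zero hPe hPx (by norm_num) (by norm_num) (by norm_num)
  have hhx : ⁅⁅e, a⁆, ⁅⁅b, a⁆, b⁆⁆ = -⁅⁅b, a⁆, b⁆ := by
    rw [leibniz_lie, hek, heb, lie_zero, add_zero, neg_lie]
  have hPv1 : g.P 0 ⁅a, ⁅⁅b, a⁆, b⁆⁆ = ⁅a, ⁅⁅b, a⁆, b⁆⁆ := by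
    simpa using g.deg_bracket hPa hPx
  have hPv2 : g.P (-1) ⁅a, ⁅a, ⁅⁅b, a⁆, b⁆⁆⁆ = ⁅a, ⁅a, ⁅⁅b, a⁆, b⁆⁆⁆ := by
    simpa using g.deg_bracket hPa hPv1
  have hav : ⁅a, ⁅a, ⁅a, ⁅⁅b, a⁆, b⁆⁆⁆⁆ = 0 :=
    g.bracket_eq_zero hPa hPv2 (by norm_num) (by norm_num) (by norm_num)
  have hx0 : ⁅⁅b, a⁆, b⁆ = 0 := sl2_kill e a _ hea hex hhx hav
  -- the element y = ⁅⁅b,a⁆,c⁆ dies by θ-transport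
  have hs : ⁅⁅e, c⁆, b⁆ = 0 := by
    rw [lie_lie, ← lie_skew c b, ← lie_skew e b, hbe2, neg_zero, lie_zero,
      sub_zero, lie_neg, lie_skew]
    exact r5
  have hy0 : ⁅⁅b, a⁆, c⁆ = 0 := by
    have h : g.θ ⁅⁅b, a⁆, c⁆ = 0 := by
      rw [g.θ_bracket, g.θ_bracket, hc, he, hθc, ← lie_skew c e, neg_lie, hs,
        neg_zero]
    have h2 := congrArg g.θ h
    rwa [g.θ_invol, g.theta_zero] at h2
  -- conclude k = ⁅b,a⁆ = 0
  have hfin1 : ⁅⁅b, c⁆, ⁅b, a⁆⁆ = ⁅b, a⁆ := by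
    rw [leibniz_lie, t_b, cross2, lie_zero, add_zero]
  have hfin0 : ⁅⁅b, c⁆, ⁅b, a⁆⁆ = 0 := by
    rw [lie_lie, ← lie_skew c ⁅b, a⁆, ← lie_skew b ⁅b, a⁆, hy0, hx0]
    simp
  have hk0 : ⁅b, a⁆ = 0 := by rw [← hfin1, hfin0]
  -- finish
  intro j hj
  rcases hj with h | h <;> subst h
  · rw [ha, hθw, map_add, g.comp_ne (by norm_num : (-1:ℤ) ≠ 1) hPe, hPc,
      zero_add, hθc, ← lie_skew a b, hk0, neg_zero]
  · rw [hb, hθw, map_add, hPe, g.comp_ne (by norm_num : (1:ℤ) ≠ -1) hPc,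
      add_zero, hθe]
    exact hk0
end

section
/- Let (𝔤, θ) be a TKK Lie algebra and let x, y ∈ 𝔤_{±1} be such that y − x ⊥ x and such that both x and y satisfy [[P_j(·), θP_j(·)], P_j(·)] = P_j(·) for j = −1, 1 (i.e. [[P_j(x), θP_j(x)], P_j(x)] = P_j(x) and [[P_j(y), θP_j(y)], P_j(y)] = P_j(y)). Then for each j = −1, 1: P_j(x) = [[P_j(y), θP_j(x)], P_j(y)]. -/
/-- Bracket of two elements of a `j`-graded piece (`j = ±1`) vanishes. -/
lemma TKK.bracket_P_same {L : Type*} [LieRing L] [LieAlgebra ℂ L] (g : TKK L)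
    (j : ℤ) (hj : j = -1 ∨ j = 1) (u v : L) : ⁅g.P j u, g.P j v⁆ = 0 := by
  have hzero : ∀ k : ℤ, g.P k ⁅g.P j u, g.P j v⁆ = 0 := by
    intro k
    by_cases hk : k = j + j
    · have hP : g.P k = 0 := g.P_outside k (by omega) (by omega) (by omega)
      rw [hP]; rfl
    · exact g.P_bracket_ne j j k hk u v
  have hsum := g.P_sum ⁅g.P j u, g.P j v⁆
  rw [hzero, hzero, hzero] at hsum
  simpa using hsum.symm

/-- If `x, y ∈ 𝔤_{±1}`, `y - x ⊥ x`, and both `x` and `y` satisfy the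
componentwise tripotent identities, then `P j x = ⁅⁅P j y, θ P j x⁆, P j y⁆`
for `j = -1, 1`. -/
theorem P_eq_double_bracket {L : Type*} [LieRing L] [LieAlgebra ℂ L] (g : TKK L)
    (x y : L) (hx : g.pm x) (hy : g.pm y) (h : g.Orth (y - x) x)
    (hxstrict : ∀ j : ℤ, j = -1 ∨ j = 1 →
      ⁅⁅g.P j x, g.θ (g.P j x)⁆, g.P j x⁆ = g.P j x)
    (hystrict : ∀ j : ℤ, j = -1 ∨ j = 1 →
      ⁅⁅g.P j y, g.θ (g.P j y)⁆, g.P j y⁆ = g.P j y)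
    (j : ℤ) (hj : j = -1 ∨ j = 1) :
    g.P j x = ⁅⁅g.P j y, g.θ (g.P j x)⁆, g.P j y⁆ := by
  set a := g.P j x with ha
  set b := g.P j y with hb
  have hxa : ⁅⁅a, g.θ a⁆, a⁆ = a := hxstrict j hj
  have hd : g.P j (y - x) = b - a := by rw [map_sub]
  have horth : ⁅b - a, g.θ a⁆ = 0 := by
    have := h j hj; rwa [hd] at this
  have hbθa : ⁅b, g.θ a⁆ = ⁅a, g.θ a⁆ := by
    rw [sub_lie, sub_eq_zero] at horth; exact horth
  have had : ⁅a, b - a⁆ = 0 := by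
    have := g.bracket_P_same j hj x (y - x)
    rwa [hd] at this
  have hθad : ⁅g.θ a, b - a⁆ = 0 := by
    rw [← lie_skew, horth, neg_zero]
  have key : ⁅⁅a, g.θ a⁆, b - a⁆ = 0 := by
    rw [lie_lie, had, hθad]; simp
  have hfin : ⁅⁅a, g.θ a⁆, b⁆ = a := by
    conv_lhs => rw [show b = a + (b - a) by abel]
    rw [lie_add, key, add_zero, hxa]
  rw [hbθa, hfin]
end

section
/- Let (𝔤, θ) be a TKK Lie algebra and let x, y ∈ 𝒰_s(𝔤_{±1}) with x ≤ y. Then P_j(x) ≤ P_j(y) for j = −1, 1 (in particular P_j(y) − P_j(x) ∈ 𝒰_s(𝔤_{±1}) and P_j(y) − P_j(x) ⊥ P_j(x)). -/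
/-- If `x, y ∈ 𝒰_s(𝔤_{±1})` and `x ≤ y`, then `P j x ≤ P j y` for `j = -1, 1`. -/
theorem le_components {L : Type*} [LieRing L] [LieAlgebra ℂ L] (g : TKK L)
    (x y : L) (hx : g.Us x) (hy : g.Us y) (hle : g.Le x y)
    (j : ℤ) (hj : j = -1 ∨ j = 1) :
    g.Le (g.P j x) (g.P j y) := by
  obtain ⟨⟨hpm, htri, hcomp⟩, horth⟩ := hle
  have hθ0 : g.θ 0 = 0 := by
    have h := g.θ_smul 0 0
    simpa using h
  have hsub : g.P j y - g.P j x = g.P j (y - x) := (map_sub (g.P j) y x).symm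
  have hj0 : (0 : ℤ) ≠ j := by rcases hj with h | h <;> simp [h]
  constructor
  · rw [hsub]
    refine ⟨?_, ?_, ?_⟩
    · show g.P 0 (g.P j (y - x)) = 0
      rw [g.P_comp, if_neg hj0]
    · show ⁅⁅g.P j (y - x), g.θ (g.P j (y - x))⁆, g.P j (y - x)⁆ = g.P j (y - x)
      exact hcomp j hj
    · intro k hk
      by_cases hkj : k = j
      · subst hkj
        rw [g.P_comp, if_pos rfl]
        exact hcomp k hk
      · rw [g.P_comp, if_neg hkj, hθ0]
        simp
  · intro k hk
    rw [hsub]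
    by_cases hkj : k = j
    · subst hkj
      rw [g.P_comp, if_pos rfl, g.P_comp, if_pos rfl]
      exact horth k hk
    · rw [g.P_comp, if_neg hkj, g.P_comp, if_neg hkj, hθ0]
      simp
end

section
/- Let (𝔤, θ) be a TKK Lie algebra. Then the relation ≤ is a partial order on 𝒰_s(𝔤_{±1}): it is reflexive (z ≤ z for all z ∈ 𝒰_s(𝔤_{±1})), antisymmetric (if z ≤ w and w ≤ z then z = w), and transitive (if x ≤ y and y ≤ w then x ≤ w). -/
namespace TKK

variable {L : Type*} [LieRing L] [LieAlgebra ℂ L] (g : TKK L)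

lemma theta_zero_s16 : g.θ 0 = 0 := by
  have h := g.θ_add 0 0
  rw [add_zero] at h
  exact left_eq_add.mp h

lemma theta_neg (x : L) : g.θ (-x) = - g.θ x := by
  have h := g.θ_add x (-x)
  rw [add_neg_cancel, g.theta_zero_s16] at h
  exact (neg_eq_of_add_eq_zero_right h.symm).symm

lemma theta_sub (x y : L) : g.θ (x - y) = g.θ x - g.θ y := by
  rw [sub_eq_add_neg, g.θ_add, g.theta_neg, ← sub_eq_add_neg]

/-- membership propagation through brackets -/
lemma mem_bracket {i j : ℤ} {z w : L} (hz : g.P i z = z) (hw : g.P j w = w) :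
    g.P (i + j) ⁅z, w⁆ = ⁅z, w⁆ := by
  calc g.P (i + j) ⁅z, w⁆ = g.P (i + j) ⁅g.P i z, g.P j w⁆ := by rw [hz, hw]
    _ = ⁅g.P i z, g.P j w⁆ := g.P_bracket i j z w
    _ = ⁅z, w⁆ := by rw [hz, hw]

lemma mem_bracket' {i j k : ℤ} {z w : L} (hz : g.P i z = z) (hw : g.P j w = w)
    (hk : i + j = k) : g.P k ⁅z, w⁆ = ⁅z, w⁆ := by
  rw [← hk]; exact g.mem_bracket hz hw

lemma bracket_zero_of_out {i j : ℤ} {z w : L} (hz : g.P i z = z) (hw : g.P j w = w)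
    (h1 : i + j ≠ -1) (h0 : i + j ≠ 0) (h2 : i + j ≠ 1) : ⁅z, w⁆ = 0 := by
  have h := g.mem_bracket hz hw
  rw [g.P_outside _ h1 h0 h2] at h
  simpa using h.symm

/-- brackets of two elements in the same extreme grade vanish -/
lemma bracket_same {j : ℤ} (hj : j = -1 ∨ j = 1) {z w : L}
    (hz : g.P j z = z) (hw : g.P j w = w) : ⁅z, w⁆ = 0 := by
  rcases hj with rfl | rfl <;>
    exact g.bracket_zero_of_out hz hw (by norm_num) (by norm_num) (by norm_num)

lemma mem_theta {j : ℤ} {z : L} (hz : g.P j z = z) : g.P (-j) (g.θ z) = g.θ z := by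
  have h := g.θ_P j z
  rw [hz] at h
  exact h.symm

lemma mem_self (j : ℤ) (x : L) : g.P j (g.P j x) = g.P j x := by
  rw [g.P_comp]; simp

lemma mem_kill {i j : ℤ} (hij : i ≠ j) {z : L} (hz : g.P j z = z) : g.P i z = 0 := by
  have h := g.P_comp i j z
  rw [if_neg hij, hz] at h
  exact h

lemma mem_add {j : ℤ} {z w : L} (hz : g.P j z = z) (hw : g.P j w = w) :
    g.P j (z + w) = z + w := by rw [map_add, hz, hw]

lemma mem_sub {j : ℤ} {z w : L} (hz : g.P j z = z) (hw : g.P j w = w) :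
    g.P j (z - w) = z - w := by rw [map_sub, hz, hw]

/-- θ of h := ⁅e, θe⁆ is -h -/
lemma theta_h (e : L) : g.θ ⁅e, g.θ e⁆ = -⁅e, g.θ e⁆ := by
  rw [g.θ_bracket, g.θ_invol, ← lie_skew]

/-- conjugation rule for brackets with h -/
lemma theta_lie_h (e ζ : L) : g.θ ⁅⁅e, g.θ e⁆, ζ⁆ = -⁅⁅e, g.θ e⁆, g.θ ζ⁆ := by
  rw [g.θ_bracket, g.theta_h, neg_lie]

/-- if z is a tripotent then ⁅h, θ z⁆ = - θ z -/
lemma lie_h_theta {e : L} (ht : ⁅⁅e, g.θ e⁆, e⁆ = e) :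
    ⁅⁅e, g.θ e⁆, g.θ e⁆ = - g.θ e := by
  have := g.theta_lie_h e e
  rw [ht] at this
  exact (neg_eq_iff_eq_neg.mpr this).symm

/- ### orthogonality lemmas, z w in the same extreme grade, ⁅z, θw⁆ = 0 -/

lemma orth_theta {z w : L} (h : ⁅z, g.θ w⁆ = 0) : ⁅g.θ z, w⁆ = 0 := by
  have := g.θ_bracket z (g.θ w)
  rw [h, g.theta_zero_s16, g.θ_invol] at this
  exact this.symm

lemma orth_symm {z w : L} (h : ⁅z, g.θ w⁆ = 0) : ⁅w, g.θ z⁆ = 0 := by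
  have h1 := g.orth_theta h
  rw [← lie_skew, h1, neg_zero]

lemma orth_h_lie {j : ℤ} (hj : j = -1 ∨ j = 1) {z w : L}
    (hz : g.P j z = z) (hw : g.P j w = w) (h : ⁅z, g.θ w⁆ = 0) :
    ⁅⁅z, g.θ z⁆, w⁆ = 0 := by
  rw [lie_lie, g.orth_theta h, g.bracket_same hj hz hw, lie_zero, lie_zero, sub_zero]

lemma orth_h_lie_theta {j : ℤ} (hj : j = -1 ∨ j = 1) {z w : L}
    (hz : g.P j z = z) (hw : g.P j w = w) (h : ⁅z, g.θ w⁆ = 0) :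
    ⁅⁅z, g.θ z⁆, g.θ w⁆ = 0 := by
  have h1 := g.theta_lie_h z w
  rw [g.orth_h_lie hj hz hw h, g.theta_zero_s16] at h1
  exact neg_eq_zero.mp h1.symm

lemma orth_hh {j : ℤ} (hj : j = -1 ∨ j = 1) {z w : L}
    (hz : g.P j z = z) (hw : g.P j w = w) (h : ⁅z, g.θ w⁆ = 0) :
    ⁅⁅z, g.θ z⁆, ⁅w, g.θ w⁆⁆ = 0 := by
  rw [leibniz_lie, g.orth_h_lie hj hz hw h, g.orth_h_lie_theta hj hz hw h,
    zero_lie, lie_zero, add_zero]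

end TKK
namespace TKK

variable {L : Type*} [LieRing L] [LieAlgebra ℂ L] (g : TKK L)

lemma smul_cancel' {c : ℂ} (hc : c ≠ 0) {a b : L} (h : c • a = c • b) : a = b := by
  have h2 := congrArg (fun x => c⁻¹ • x) h
  simpa [smul_smul, inv_mul_cancel₀ hc] using h2

lemma triple_cancel' {a b : L} (h : a + a + a = b + b + b) : a = b := by
  refine smul_cancel' (c := 3) (by norm_num) ?_
  have h3 : ∀ x : L, (3:ℂ) • x = x + x + x := by
    intro x
    rw [show (3:ℂ) = 1 + 1 + 1 by norm_num, add_smul, add_smul, one_smul]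
  rw [h3, h3, h]

/-- The fundamental cubic identity: if `e ∈ 𝔤ⱼ` is a tripotent and `z ∈ 𝔤₋ⱼ`, then
`D := ad ⁅e,θe⁆` satisfies `2 D³ z + 3 D² z + D z = 0`. -/
lemma cubic {j : ℤ} (hj : j = -1 ∨ j = 1) {e z : L}
    (he : g.P j e = e) (ht : ⁅⁅e, g.θ e⁆, e⁆ = e) (hz : g.P (-j) z = z) :
    (⁅⁅e, g.θ e⁆, ⁅⁅e, g.θ e⁆, ⁅⁅e, g.θ e⁆, z⁆⁆⁆
      + ⁅⁅e, g.θ e⁆, ⁅⁅e, g.θ e⁆, ⁅⁅e, g.θ e⁆, z⁆⁆⁆)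
      + (⁅⁅e, g.θ e⁆, ⁅⁅e, g.θ e⁆, z⁆⁆ + ⁅⁅e, g.θ e⁆, ⁅⁅e, g.θ e⁆, z⁆⁆
          + ⁅⁅e, g.θ e⁆, ⁅⁅e, g.θ e⁆, z⁆⁆)
      + ⁅⁅e, g.θ e⁆, z⁆ = 0 := by
  set f := g.θ e with hfdef
  have hjneg : -j = -1 ∨ -j = 1 := by rcases hj with rfl | rfl <;> simp
  have hf : g.P (-j) f = f := g.mem_theta he
  set h := ⁅e, f⁆ with hhdef
  set s := ⁅e, z⁆ with hsdef
  have hs : g.P 0 s = s := g.mem_bracket' he hz (by ring)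
  set t := ⁅e, s⁆ with htdef
  have htm : g.P j t = t := g.mem_bracket' he hs (by ring)
  have hfz : ⁅f, z⁆ = 0 := g.bracket_same hjneg hf hz
  have het : ⁅e, t⁆ = 0 := g.bracket_same hj he htm
  have hhe : ⁅h, e⁆ = e := ht
  have hhf : ⁅h, f⁆ = -f := g.lie_h_theta ht
  -- D z = -⁅f, s⁆
  have hD1 : ⁅h, z⁆ = -⁅f, s⁆ := by
    rw [hhdef, lie_lie, ← hsdef, hfz, lie_zero, zero_sub]
  have hfs : ⁅f, s⁆ = -⁅h, z⁆ := by rw [hD1, neg_neg]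
  -- ⁅h,s⁆ + ⁅h,s⁆ = s - ⁅f, t⁆
  have hE1 : ⁅h, s⁆ + ⁅h, s⁆ = s - ⁅f, t⁆ := by
    have e1 : ⁅h, s⁆ = s + ⁅e, ⁅h, z⁆⁆ := by
      rw [hsdef, leibniz_lie, hhe]
    have e2 : ⁅e, ⁅h, z⁆⁆ = -(⁅h, s⁆ + ⁅f, t⁆) := by
      rw [hD1, lie_neg, leibniz_lie, ← hhdef, ← htdef]
    rw [e2] at e1
    calc ⁅h, s⁆ + ⁅h, s⁆ = (s + -(⁅h, s⁆ + ⁅f, t⁆)) + ⁅h, s⁆ := by rw [← e1]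
      _ = s - ⁅f, t⁆ := by abel
  -- W = D² z + D² z + D z  where W = ⁅f, ⁅f, t⁆⁆
  set W := ⁅f, ⁅f, t⁆⁆ with hWdef
  have e1 : ⁅h, ⁅h, z⁆⁆ = ⁅f, s⁆ - ⁅f, ⁅h, s⁆⁆ := by
    rw [hD1, lie_neg, leibniz_lie, hhf, neg_lie]
    abel
  have hG2 : ⁅f, ⁅h, s⁆⁆ + ⁅f, ⁅h, s⁆⁆ = ⁅f, s⁆ - W := by
    rw [← lie_add, hE1, lie_sub, hWdef]
  have hE2 : W = ⁅h, ⁅h, z⁆⁆ + ⁅h, ⁅h, z⁆⁆ + ⁅h, z⁆ := by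
    have e3 : ⁅h, ⁅h, z⁆⁆ + ⁅h, ⁅h, z⁆⁆
        = (⁅f, s⁆ + ⁅f, s⁆) - (⁅f, ⁅h, s⁆⁆ + ⁅f, ⁅h, s⁆⁆) := by
      rw [e1]; abel
    rw [hG2, hfs] at e3
    have e4 : ⁅h, ⁅h, z⁆⁆ + ⁅h, ⁅h, z⁆⁆ + ⁅h, z⁆
        = (-⁅h, z⁆ + -⁅h, z⁆ - (-⁅h, z⁆ - W)) + ⁅h, z⁆ := by rw [e3]
    rw [e4]; abel
  -- ⁅h, t⁆ = t
  have hht : ⁅h, t⁆ = t := by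
    have e4 : ⁅h, t⁆ = t + ⁅e, ⁅h, s⁆⁆ := by
      rw [htdef, leibniz_lie, hhe]
    have e6 : ⁅e, ⁅f, t⁆⁆ = ⁅h, t⁆ := by
      rw [leibniz_lie, ← hhdef, het, lie_zero, add_zero]
    have e5 : ⁅e, ⁅h, s⁆⁆ + ⁅e, ⁅h, s⁆⁆ = t - ⁅h, t⁆ := by
      rw [← lie_add, hE1, lie_sub, ← htdef, e6]
    have e7 : ⁅e, ⁅h, s⁆⁆ = ⁅h, t⁆ - t := by
      rw [e4]; abel
    rw [e7] at e5
    refine triple_cancel' ?_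
    calc ⁅h, t⁆ + ⁅h, t⁆ + ⁅h, t⁆
        = (⁅h, t⁆ - t) + (⁅h, t⁆ - t) + t + t + ⁅h, t⁆ := by abel
      _ = (t - ⁅h, t⁆) + t + t + ⁅h, t⁆ := by rw [e5]
      _ = t + t + t := by abel
  -- D W = -W
  have hDW : ⁅h, W⁆ = -W := by
    have i1 : ⁅h, ⁅f, t⁆⁆ = 0 := by
      rw [leibniz_lie, hhf, hht, neg_lie, neg_add_cancel]
    rw [hWdef, leibniz_lie, hhf, i1, lie_zero, add_zero, neg_lie]
  -- conclude
  have fin : ⁅h, W⁆ = ⁅h, ⁅h, ⁅h, z⁆⁆⁆ + ⁅h, ⁅h, ⁅h, z⁆⁆⁆ + ⁅h, ⁅h, z⁆⁆ := by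
    rw [hE2, lie_add, lie_add]
  rw [hDW, hE2] at fin
  calc (⁅h, ⁅h, ⁅h, z⁆⁆⁆ + ⁅h, ⁅h, ⁅h, z⁆⁆⁆)
      + (⁅h, ⁅h, z⁆⁆ + ⁅h, ⁅h, z⁆⁆ + ⁅h, ⁅h, z⁆⁆) + ⁅h, z⁆
      = (⁅h, ⁅h, ⁅h, z⁆⁆⁆ + ⁅h, ⁅h, ⁅h, z⁆⁆⁆ + ⁅h, ⁅h, z⁆⁆)
        + (⁅h, ⁅h, z⁆⁆ + ⁅h, ⁅h, z⁆⁆ + ⁅h, z⁆) := by abel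
    _ = -(⁅h, ⁅h, z⁆⁆ + ⁅h, ⁅h, z⁆⁆ + ⁅h, z⁆)
        + (⁅h, ⁅h, z⁆⁆ + ⁅h, ⁅h, z⁆⁆ + ⁅h, z⁆) := by rw [← fin]
    _ = 0 := by abel

end TKK
namespace TKK

variable {L : Type*} [LieRing L] [LieAlgebra ℂ L] (g : TKK L)

/-- If `D² z = 0` then `D z = 0` (opposite grade). -/
lemma cubic_kill {j : ℤ} (hj : j = -1 ∨ j = 1) {e z : L}
    (he : g.P j e = e) (ht : ⁅⁅e, g.θ e⁆, e⁆ = e) (hz : g.P (-j) z = z)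
    (h2 : ⁅⁅e, g.θ e⁆, ⁅⁅e, g.θ e⁆, z⁆⁆ = 0) : ⁅⁅e, g.θ e⁆, z⁆ = 0 := by
  have hc := g.cubic hj he ht hz
  rw [h2, lie_zero] at hc
  simpa using hc

/-- Mirror cubic identity on grade `j` (same side as `e`): `2 D³ z - 3 D² z + D z = 0`. -/
lemma cubic' {j : ℤ} (hj : j = -1 ∨ j = 1) {e z : L}
    (he : g.P j e = e) (ht : ⁅⁅e, g.θ e⁆, e⁆ = e) (hz : g.P j z = z) :
    (⁅⁅e, g.θ e⁆, ⁅⁅e, g.θ e⁆, ⁅⁅e, g.θ e⁆, z⁆⁆⁆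
      + ⁅⁅e, g.θ e⁆, ⁅⁅e, g.θ e⁆, ⁅⁅e, g.θ e⁆, z⁆⁆⁆)
      - (⁅⁅e, g.θ e⁆, ⁅⁅e, g.θ e⁆, z⁆⁆ + ⁅⁅e, g.θ e⁆, ⁅⁅e, g.θ e⁆, z⁆⁆
          + ⁅⁅e, g.θ e⁆, ⁅⁅e, g.θ e⁆, z⁆⁆)
      + ⁅⁅e, g.θ e⁆, z⁆ = 0 := by
  have hθz : g.P (-j) (g.θ z) = g.θ z := g.mem_theta hz
  have hc := g.cubic hj he ht hθz
  have happ := congrArg g.θ hc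
  set h := ⁅e, g.θ e⁆ with hh
  have t1 : g.θ ⁅h, g.θ z⁆ = -⁅h, z⁆ := by
    rw [g.theta_lie_h, g.θ_invol]
  have t2 : g.θ ⁅h, ⁅h, g.θ z⁆⁆ = ⁅h, ⁅h, z⁆⁆ := by
    rw [g.theta_lie_h, t1, lie_neg, neg_neg]
  have t3 : g.θ ⁅h, ⁅h, ⁅h, g.θ z⁆⁆⁆ = -⁅h, ⁅h, ⁅h, z⁆⁆⁆ := by
    rw [g.theta_lie_h, t2]
  rw [g.θ_add, g.θ_add, g.θ_add, g.θ_add, g.θ_add, t1, t2, t3, g.theta_zero_s16] at happ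
  have := congrArg Neg.neg happ
  simp only [neg_zero] at this
  calc (⁅h, ⁅h, ⁅h, z⁆⁆⁆ + ⁅h, ⁅h, ⁅h, z⁆⁆⁆)
      - (⁅h, ⁅h, z⁆⁆ + ⁅h, ⁅h, z⁆⁆ + ⁅h, ⁅h, z⁆⁆) + ⁅h, z⁆
      = -(-⁅h, ⁅h, ⁅h, z⁆⁆⁆ + -⁅h, ⁅h, ⁅h, z⁆⁆⁆
          + (⁅h, ⁅h, z⁆⁆ + ⁅h, ⁅h, z⁆⁆ + ⁅h, ⁅h, z⁆⁆) + -⁅h, z⁆) := by abel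
    _ = 0 := by rw [this]

/-- Eigenvalue-2 vectors of `ad ⁅e,θe⁆` in grade `j` vanish. -/
lemma eigen2_kill {j : ℤ} (hj : j = -1 ∨ j = 1) {e p : L}
    (he : g.P j e = e) (ht : ⁅⁅e, g.θ e⁆, e⁆ = e) (hp : g.P j p = p)
    (h2 : ⁅⁅e, g.θ e⁆, p⁆ = p + p) : p = 0 := by
  have hc := g.cubic' hj he ht hp
  set h := ⁅e, g.θ e⁆ with hh
  have d2 : ⁅h, ⁅h, p⁆⁆ = p + p + p + p := by
    rw [h2, lie_add, h2]; abel
  have d3 : ⁅h, ⁅h, ⁅h, p⁆⁆⁆ = p+p+p+p+p+p+p+p := by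
    rw [d2, lie_add, lie_add, lie_add, h2]; abel
  rw [d3, d2, h2] at hc
  have h6 : p + p + p + p + p + p = 0 := by
    calc p + p + p + p + p + p
        = (p+p+p+p+p+p+p+p + (p+p+p+p+p+p+p+p))
          - (p+p+p+p + (p+p+p+p) + (p+p+p+p)) + (p + p) := by abel
      _ = 0 := hc
  have h3 : p + p + p = 0 := by
    have := congrArg (fun x => (2:ℂ)⁻¹ • x) (show (2:ℂ) • (p+p+p) = (2:ℂ) • 0 by
      rw [smul_zero, two_smul]
      calc (p+p+p) + (p+p+p) = p+p+p+p+p+p := by abel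
        _ = 0 := h6)
    simpa [smul_smul] using this
  refine triple_cancel' ?_
  rw [h3]; abel

/-- An element of `𝔤₀` which is an eigenvector of `ad ⁅e,θe⁆` with eigenvalue 1 vanishes. -/
lemma zero_grade_eigen1 {j : ℤ} (hj : j = -1 ∨ j = 1) {e ζ : L}
    (he : g.P j e = e) (ht : ⁅⁅e, g.θ e⁆, e⁆ = e) (hζ : g.P 0 ζ = ζ)
    (h1 : ⁅⁅e, g.θ e⁆, ζ⁆ = ζ) : ζ = 0 := by
  set f := g.θ e with hfdef
  have hjneg : -j = -1 ∨ -j = 1 := by rcases hj with rfl | rfl <;> simp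
  have hf : g.P (-j) f = f := g.mem_theta he
  set h := ⁅e, f⁆ with hh
  have hhe : ⁅h, e⁆ = e := ht
  have hhf : ⁅h, f⁆ = -f := g.lie_h_theta ht
  set p := ⁅e, ζ⁆ with hpdef
  set q := ⁅f, ζ⁆ with hqdef
  have hpm : g.P j p = p := g.mem_bracket' he hζ (by ring)
  have hqm : g.P (-j) q = q := g.mem_bracket' hf hζ (by ring)
  -- p is an eigenvector with eigenvalue 2
  have hp2 : ⁅h, p⁆ = p + p := by
    rw [hpdef, leibniz_lie, hhe, h1]
  have hp0 : p = 0 := g.eigen2_kill hj he ht hpm hp2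
  -- ζ = ⁅e, q⁆
  have hζeq : ζ = ⁅e, q⁆ := by
    have e0 : ⁅h, ζ⁆ = ⁅e, q⁆ - ⁅f, p⁆ := by
      rw [hh, lie_lie, ← hqdef, ← hpdef]
    rw [h1, hp0, lie_zero, sub_zero] at e0
    exact e0
  -- q vanishes
  have hq0 : ⁅h, q⁆ = 0 := by
    rw [hqdef, leibniz_lie, hhf, h1, neg_lie, ← hqdef, neg_add_cancel]
  have hfq : ⁅f, q⁆ = 0 := g.bracket_same hjneg hf hqm
  have hfe : ⁅f, e⁆ = -h := by
    rw [hh]; exact (lie_skew f e).symm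
  have hq : q = 0 := by
    have e1 : q = ⁅f, ⁅e, q⁆⁆ := by rw [hqdef, ← hζeq]
    rw [leibniz_lie, hfq, lie_zero, add_zero, hfe, neg_lie, hq0, neg_zero] at e1
    exact e1
  rw [hζeq, hq, lie_zero]

end TKK
namespace TKK

variable {L : Type*} [LieRing L] [LieAlgebra ℂ L] (g : TKK L)

/-- Peirce expression: if `b ⊥ c` with `c` tripotent (same grade), then `{b+c, c, b+c} = c`. -/
lemma peirce {j : ℤ} (hj : j = -1 ∨ j = 1) {b c : L}
    (hb : g.P j b = b) (hc : g.P j c = c) (htc : ⁅⁅c, g.θ c⁆, c⁆ = c)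
    (horth : ⁅b, g.θ c⁆ = 0) :
    ⁅⁅b + c, g.θ c⁆, b + c⁆ = c := by
  rw [add_lie, horth, zero_add, lie_add, htc,
    g.orth_h_lie hj hc hb (g.orth_symm horth), zero_add]

/-- Orthogonality propagation: if `b ⊥ c`, `c` tripotent, and `a ⊥ (b+c)`, then `a ⊥ c`. -/
lemma orth_step {j : ℤ} (hj : j = -1 ∨ j = 1) {a b c : L}
    (ha : g.P j a = a) (hb : g.P j b = b) (hc : g.P j c = c)
    (htc : ⁅⁅c, g.θ c⁆, c⁆ = c) (hbc : ⁅b, g.θ c⁆ = 0)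
    (habc : ⁅a, g.θ (b + c)⁆ = 0) : ⁅a, g.θ c⁆ = 0 := by
  have hP := g.peirce hj hb hc htc hbc
  have hθ : g.θ c = ⁅⁅g.θ (b + c), c⁆, g.θ (b + c)⁆ := by
    conv_lhs => rw [← hP]
    rw [g.θ_bracket, g.θ_bracket, g.θ_invol]
  have hac : ⁅a, c⁆ = 0 := g.bracket_same hj ha hc
  have h1 : ⁅a, ⁅g.θ (b + c), c⁆⁆ = 0 := by
    rw [leibniz_lie, habc, zero_lie, hac, lie_zero, add_zero]
  rw [hθ, leibniz_lie, h1, zero_lie, habc, lie_zero, add_zero]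

/-- first-component version -/
lemma orth_step' {j : ℤ} (hj : j = -1 ∨ j = 1) {a b c : L}
    (ha : g.P j a = a) (hb : g.P j b = b) (hc : g.P j c = c)
    (htc : ⁅⁅c, g.θ c⁆, c⁆ = c) (hbc : ⁅b, g.θ c⁆ = 0)
    (habc : ⁅a, g.θ (b + c)⁆ = 0) : ⁅a, g.θ b⁆ = 0 := by
  have h1 := g.orth_step hj ha hb hc htc hbc habc
  rw [g.θ_add, lie_add, h1, add_zero] at habc
  exact habc

/-- The sum of two orthogonal tripotents (same grade) is a tripotent. -/
lemma trip_add {j : ℤ} (hj : j = -1 ∨ j = 1) {a b : L}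
    (ha : g.P j a = a) (hb : g.P j b = b)
    (hta : ⁅⁅a, g.θ a⁆, a⁆ = a) (htb : ⁅⁅b, g.θ b⁆, b⁆ = b)
    (horth : ⁅a, g.θ b⁆ = 0) : ⁅⁅a + b, g.θ (a + b)⁆, a + b⁆ = a + b := by
  have horth' : ⁅b, g.θ a⁆ = 0 := g.orth_symm horth
  have hsum : ⁅a + b, g.θ (a + b)⁆ = ⁅a, g.θ a⁆ + ⁅b, g.θ b⁆ := by
    rw [g.θ_add, add_lie, lie_add, lie_add, horth, horth', add_zero, zero_add]
  rw [hsum, add_lie, lie_add, lie_add, hta, htb,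
    g.orth_h_lie hj ha hb horth, g.orth_h_lie hj hb ha horth', add_zero, zero_add]

/-- decomposition of a `pm` element -/
lemma pm_decomp {z : L} (hz : g.pm z) : g.P (-1) z + g.P 1 z = z := by
  have h := g.P_sum z
  rw [hz, add_zero] at h
  exact h

/-- Splitting of the full tripotent identity for elements of `Us`:
the mixed cross terms vanish. -/
lemma us_split (z : L) (hz : g.Us z) {j : ℤ} (hj : j = -1 ∨ j = 1) :
    ⁅⁅g.P j z, g.θ (g.P j z)⁆, g.P (-j) z⁆ = 0 := by
  obtain ⟨hpm, htrip, hcomp⟩ := hz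
  set a := g.P (-1) z with hadef
  set b := g.P 1 z with hbdef
  have ha : g.P (-1) a = a := g.mem_self _ _
  have hb : g.P 1 b = b := g.mem_self _ _
  have hd : a + b = z := g.pm_decomp hpm
  have hta : ⁅⁅a, g.θ a⁆, a⁆ = a := hcomp (-1) (Or.inl rfl)
  have htb : ⁅⁅b, g.θ b⁆, b⁆ = b := hcomp 1 (Or.inr rfl)
  have hab : ⁅a, g.θ b⁆ = 0 :=
    g.bracket_zero_of_out ha (g.mem_theta hb) (by norm_num) (by norm_num) (by norm_num)
  have hba : ⁅b, g.θ a⁆ = 0 :=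
    g.bracket_zero_of_out hb (g.mem_theta ha) (by norm_num) (by norm_num) (by norm_num)
  have hsum : ⁅z, g.θ z⁆ = ⁅a, g.θ a⁆ + ⁅b, g.θ b⁆ := by
    rw [← hd, g.θ_add, add_lie, lie_add, lie_add, hab, hba, add_zero, zero_add]
  have hexp : ⁅⁅z, g.θ z⁆, z⁆ = a + b + (⁅⁅a, g.θ a⁆, b⁆ + ⁅⁅b, g.θ b⁆, a⁆) := by
    rw [hsum]
    conv_lhs => rw [← hd]
    rw [add_lie, lie_add, lie_add, hta, htb]
    abel
  rw [htrip] at hexp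
  have hcross : ⁅⁅a, g.θ a⁆, b⁆ + ⁅⁅b, g.θ b⁆, a⁆ = 0 := by
    have := hexp
    conv_lhs at this => rw [← hd]
    have h2 := congrArg (fun x => x - (a + b)) this
    simpa using h2.symm
  -- project onto grades to split
  have hma : g.P 0 ⁅a, g.θ a⁆ = ⁅a, g.θ a⁆ := g.mem_bracket' ha (g.mem_theta ha) (by ring)
  have hmb : g.P 0 ⁅b, g.θ b⁆ = ⁅b, g.θ b⁆ := g.mem_bracket' hb (g.mem_theta hb) (by ring)
  have hm1 : g.P 1 ⁅⁅a, g.θ a⁆, b⁆ = ⁅⁅a, g.θ a⁆, b⁆ := g.mem_bracket' hma hb (by ring)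
  have hm2 : g.P (-1) ⁅⁅b, g.θ b⁆, a⁆ = ⁅⁅b, g.θ b⁆, a⁆ := g.mem_bracket' hmb ha (by ring)
  have hz1 : ⁅⁅a, g.θ a⁆, b⁆ = 0 := by
    have := congrArg (g.P 1) hcross
    rw [map_add, map_zero, hm1, g.mem_kill (by norm_num) hm2, add_zero] at this
    exact this
  have hz2 : ⁅⁅b, g.θ b⁆, a⁆ = 0 := by
    rw [hz1, zero_add] at hcross
    exact hcross
  rcases hj with rfl | rfl
  · exact hz1
  · simpa using hz2

end TKK
namespace TKK

variable {L : Type*} [LieRing L] [LieAlgebra ℂ L] (g : TKK L)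

/-- If `A, B, A+B ∈ Us` and `A ⊥ B`, then all mixed-grade cross terms vanish. -/
lemma cross_full {A B : L} (hA : g.Us A) (hB : g.Us B) (hAB : g.Us (A + B))
    (horth : g.Orth A B) :
    (⁅⁅g.P (-1) A, g.θ (g.P (-1) A)⁆, g.P 1 B⁆ = 0
      ∧ ⁅⁅g.P (-1) B, g.θ (g.P (-1) B)⁆, g.P 1 A⁆ = 0)
    ∧ (⁅⁅g.P 1 A, g.θ (g.P 1 A)⁆, g.P (-1) B⁆ = 0
      ∧ ⁅⁅g.P 1 B, g.θ (g.P 1 B)⁆, g.P (-1) A⁆ = 0) := by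
  set Am := g.P (-1) A with hAmdef
  set A1 := g.P 1 A with hA1def
  set Bm := g.P (-1) B with hBmdef
  set B1 := g.P 1 B with hB1def
  have hmAm : g.P (-1) Am = Am := g.mem_self _ _
  have hmA1 : g.P 1 A1 = A1 := g.mem_self _ _
  have hmBm : g.P (-1) Bm = Bm := g.mem_self _ _
  have hmB1 : g.P 1 B1 = B1 := g.mem_self _ _
  have hdA : Am + A1 = A := g.pm_decomp hA.1
  have hdB : Bm + B1 = B := g.pm_decomp hB.1
  have htAm : ⁅⁅Am, g.θ Am⁆, Am⁆ = Am := hA.2.2 (-1) (Or.inl rfl)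
  have htA1 : ⁅⁅A1, g.θ A1⁆, A1⁆ = A1 := hA.2.2 1 (Or.inr rfl)
  have htBm : ⁅⁅Bm, g.θ Bm⁆, Bm⁆ = Bm := hB.2.2 (-1) (Or.inl rfl)
  have htB1 : ⁅⁅B1, g.θ B1⁆, B1⁆ = B1 := hB.2.2 1 (Or.inr rfl)
  have hoM : ⁅Am, g.θ Bm⁆ = 0 := horth (-1) (Or.inl rfl)
  have ho1 : ⁅A1, g.θ B1⁆ = 0 := horth 1 (Or.inr rfl)
  -- grading zeros
  have z1 : ⁅Am, g.θ A1⁆ = 0 :=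
    g.bracket_zero_of_out hmAm (g.mem_theta hmA1) (by norm_num) (by norm_num) (by norm_num)
  have z2 : ⁅Am, g.θ B1⁆ = 0 :=
    g.bracket_zero_of_out hmAm (g.mem_theta hmB1) (by norm_num) (by norm_num) (by norm_num)
  have z3 : ⁅A1, g.θ Am⁆ = 0 :=
    g.bracket_zero_of_out hmA1 (g.mem_theta hmAm) (by norm_num) (by norm_num) (by norm_num)
  have z4 : ⁅A1, g.θ Bm⁆ = 0 :=
    g.bracket_zero_of_out hmA1 (g.mem_theta hmBm) (by norm_num) (by norm_num) (by norm_num)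
  have z5 : ⁅Bm, g.θ A1⁆ = 0 :=
    g.bracket_zero_of_out hmBm (g.mem_theta hmA1) (by norm_num) (by norm_num) (by norm_num)
  have z6 : ⁅Bm, g.θ B1⁆ = 0 :=
    g.bracket_zero_of_out hmBm (g.mem_theta hmB1) (by norm_num) (by norm_num) (by norm_num)
  have z7 : ⁅B1, g.θ Am⁆ = 0 :=
    g.bracket_zero_of_out hmB1 (g.mem_theta hmAm) (by norm_num) (by norm_num) (by norm_num)
  have z8 : ⁅B1, g.θ Bm⁆ = 0 :=
    g.bracket_zero_of_out hmB1 (g.mem_theta hmBm) (by norm_num) (by norm_num) (by norm_num)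
  have z9 : ⁅Bm, g.θ Am⁆ = 0 := g.orth_symm hoM
  have z10 : ⁅B1, g.θ A1⁆ = 0 := g.orth_symm ho1
  -- T = sum of the four h's
  have hθAB : g.θ (A + B) = g.θ Am + g.θ A1 + (g.θ Bm + g.θ B1) := by
    rw [g.θ_add]
    conv_lhs => rw [← hdA, ← hdB]
    rw [g.θ_add, g.θ_add]
  have hABd : A + B = Am + A1 + (Bm + B1) := by rw [hdA, hdB]
  have hT : ⁅A + B, g.θ (A + B)⁆
      = ⁅Am, g.θ Am⁆ + ⁅A1, g.θ A1⁆ + ⁅Bm, g.θ Bm⁆ + ⁅B1, g.θ B1⁆ := by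
    rw [hθAB]
    conv_lhs => rw [hABd]
    simp only [add_lie, lie_add, z1, z2, z3, z4, z5, z6, z7, z8, z9, z10, hoM, ho1,
      add_zero, zero_add]
    abel
  -- expand the full tripotent identity of A + B
  have hsA1 : ⁅⁅Am, g.θ Am⁆, A1⁆ = 0 := g.us_split A hA (Or.inl rfl)
  have hsAm : ⁅⁅A1, g.θ A1⁆, Am⁆ = 0 := by
    have := g.us_split A hA (Or.inr rfl); simpa using this
  have hsB1 : ⁅⁅Bm, g.θ Bm⁆, B1⁆ = 0 := g.us_split B hB (Or.inl rfl)
  have hsBm : ⁅⁅B1, g.θ B1⁆, Bm⁆ = 0 := by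
    have := g.us_split B hB (Or.inr rfl); simpa using this
  have c1 : ⁅⁅Am, g.θ Am⁆, Bm⁆ = 0 := g.orth_h_lie (Or.inl rfl) hmAm hmBm hoM
  have c2 : ⁅⁅Bm, g.θ Bm⁆, Am⁆ = 0 := g.orth_h_lie (Or.inl rfl) hmBm hmAm z9
  have c3 : ⁅⁅A1, g.θ A1⁆, B1⁆ = 0 := g.orth_h_lie (Or.inr rfl) hmA1 hmB1 ho1
  have c4 : ⁅⁅B1, g.θ B1⁆, A1⁆ = 0 := g.orth_h_lie (Or.inr rfl) hmB1 hmA1 z10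
  have hfull : ⁅⁅A + B, g.θ (A + B)⁆, A + B⁆ = A + B := hAB.2.1
  rw [hT] at hfull
  conv_lhs at hfull => rw [hABd]
  simp only [add_lie, lie_add, htAm, htA1, htBm, htB1, hsA1, hsAm, hsB1, hsBm,
    c1, c2, c3, c4, add_zero, zero_add] at hfull
  rw [hABd] at hfull
  -- hfull now contains the four cross terms plus A+B = A+B; extract cross sum = 0
  have hcross : ⁅⁅Am, g.θ Am⁆, B1⁆ + ⁅⁅A1, g.θ A1⁆, Bm⁆
      + ⁅⁅Bm, g.θ Bm⁆, A1⁆ + ⁅⁅B1, g.θ B1⁆, Am⁆ = 0 := by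
    have h3 : (⁅⁅Am, g.θ Am⁆, B1⁆ + ⁅⁅A1, g.θ A1⁆, Bm⁆
        + ⁅⁅Bm, g.θ Bm⁆, A1⁆ + ⁅⁅B1, g.θ B1⁆, Am⁆) + (Am + A1 + (Bm + B1))
        = Am + ⁅⁅B1, g.θ B1⁆, Am⁆ + (A1 + ⁅⁅Bm, g.θ Bm⁆, A1⁆)
          + (⁅⁅A1, g.θ A1⁆, Bm⁆ + Bm + (⁅⁅Am, g.θ Am⁆, B1⁆ + B1)) := by abel
    rw [hfull] at h3
    exact add_eq_right.mp h3
  -- memberships of the four cross terms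
  have hhAm : g.P 0 ⁅Am, g.θ Am⁆ = ⁅Am, g.θ Am⁆ :=
    g.mem_bracket' hmAm (g.mem_theta hmAm) (by ring)
  have hhA1 : g.P 0 ⁅A1, g.θ A1⁆ = ⁅A1, g.θ A1⁆ :=
    g.mem_bracket' hmA1 (g.mem_theta hmA1) (by ring)
  have hhBm : g.P 0 ⁅Bm, g.θ Bm⁆ = ⁅Bm, g.θ Bm⁆ :=
    g.mem_bracket' hmBm (g.mem_theta hmBm) (by ring)
  have hhB1 : g.P 0 ⁅B1, g.θ B1⁆ = ⁅B1, g.θ B1⁆ :=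
    g.mem_bracket' hmB1 (g.mem_theta hmB1) (by ring)
  have m1 : g.P 1 ⁅⁅Am, g.θ Am⁆, B1⁆ = ⁅⁅Am, g.θ Am⁆, B1⁆ := g.mem_bracket' hhAm hmB1 (by ring)
  have m2 : g.P (-1) ⁅⁅A1, g.θ A1⁆, Bm⁆ = ⁅⁅A1, g.θ A1⁆, Bm⁆ := g.mem_bracket' hhA1 hmBm (by ring)
  have m3 : g.P 1 ⁅⁅Bm, g.θ Bm⁆, A1⁆ = ⁅⁅Bm, g.θ Bm⁆, A1⁆ := g.mem_bracket' hhBm hmA1 (by ring)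
  have m4 : g.P (-1) ⁅⁅B1, g.θ B1⁆, Am⁆ = ⁅⁅B1, g.θ B1⁆, Am⁆ := g.mem_bracket' hhB1 hmAm (by ring)
  -- project onto grade 1 / grade -1
  have R1 : ⁅⁅Am, g.θ Am⁆, B1⁆ + ⁅⁅Bm, g.θ Bm⁆, A1⁆ = 0 := by
    have h := congrArg (g.P 1) hcross
    simp only [map_add, map_zero, m1, m3,
      g.mem_kill (show (1:ℤ) ≠ -1 by norm_num) m2,
      g.mem_kill (show (1:ℤ) ≠ -1 by norm_num) m4, add_zero, zero_add] at h
    exact h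
  have Rm : ⁅⁅A1, g.θ A1⁆, Bm⁆ + ⁅⁅B1, g.θ B1⁆, Am⁆ = 0 := by
    have h := congrArg (g.P (-1)) hcross
    simp only [map_add, map_zero, m2, m4,
      g.mem_kill (show (-1:ℤ) ≠ 1 by norm_num) m1,
      g.mem_kill (show (-1:ℤ) ≠ 1 by norm_num) m3, add_zero, zero_add] at h
    exact h
  -- split R1 using the cubic identity for Am
  have hmB1' : g.P (-(-1)) B1 = B1 := by simpa using hmB1
  have hmA1' : g.P (-(-1)) A1 = A1 := by simpa using hmA1
  have hcomm : ⁅⁅Am, g.θ Am⁆, ⁅Bm, g.θ Bm⁆⁆ = 0 :=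
    g.orth_hh (Or.inl rfl) hmAm hmBm hoM
  have k1 : ⁅⁅Am, g.θ Am⁆, ⁅⁅Bm, g.θ Bm⁆, A1⁆⁆ = 0 := by
    rw [leibniz_lie, hcomm, zero_lie, hsA1, lie_zero, add_zero]
  have e1 : ⁅⁅Am, g.θ Am⁆, B1⁆ = -⁅⁅Bm, g.θ Bm⁆, A1⁆ :=
    eq_neg_of_add_eq_zero_left R1
  have k2 : ⁅⁅Am, g.θ Am⁆, ⁅⁅Am, g.θ Am⁆, B1⁆⁆ = 0 := by
    rw [e1, lie_neg, k1, neg_zero]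
  have X1 : ⁅⁅Am, g.θ Am⁆, B1⁆ = 0 :=
    g.cubic_kill (Or.inl rfl) hmAm htAm hmB1' k2
  have X2 : ⁅⁅Bm, g.θ Bm⁆, A1⁆ = 0 := by
    rw [X1, zero_add] at R1; exact R1
  -- split Rm using the cubic identity for A1
  have hmBm' : g.P (-1) Bm = Bm := hmBm
  have hcomm' : ⁅⁅A1, g.θ A1⁆, ⁅B1, g.θ B1⁆⁆ = 0 :=
    g.orth_hh (Or.inr rfl) hmA1 hmB1 ho1
  have k1' : ⁅⁅A1, g.θ A1⁆, ⁅⁅B1, g.θ B1⁆, Am⁆⁆ = 0 := by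
    rw [leibniz_lie, hcomm', zero_lie, hsAm, lie_zero, add_zero]
  have e1' : ⁅⁅A1, g.θ A1⁆, Bm⁆ = -⁅⁅B1, g.θ B1⁆, Am⁆ :=
    eq_neg_of_add_eq_zero_left Rm
  have k2' : ⁅⁅A1, g.θ A1⁆, ⁅⁅A1, g.θ A1⁆, Bm⁆⁆ = 0 := by
    rw [e1', lie_neg, k1', neg_zero]
  have X3 : ⁅⁅A1, g.θ A1⁆, Bm⁆ = 0 := by
    have := g.cubic_kill (Or.inr rfl) hmA1 htA1 (show g.P (-1) Bm = Bm from hmBm) k2'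
    exact this
  have X4 : ⁅⁅B1, g.θ B1⁆, Am⁆ = 0 := by
    rw [X3, zero_add] at Rm; exact Rm
  exact ⟨⟨X1, X2⟩, ⟨X3, X4⟩⟩

end TKK
namespace TKK

variable {L : Type*} [LieRing L] [LieAlgebra ℂ L] (g : TKK L)

/-- π-vanishing: if `a ∈ 𝔤ⱼ` is a tripotent with `⁅⁅a,θa⁆, uu + xx⁆ = 0`,
`xx` a tripotent in `𝔤₋ⱼ` orthogonal to `uu`, then `⁅⁅a,θa⁆, xx⁆ = 0`. -/
lemma pi_vanish {j : ℤ} (hj : j = -1 ∨ j = 1) {a xx uu : L}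
    (ha : g.P j a = a) (hta : ⁅⁅a, g.θ a⁆, a⁆ = a)
    (hx : g.P (-j) xx = xx) (hu : g.P (-j) uu = uu)
    (hjneg : -j = -1 ∨ -j = 1)
    (htx : ⁅⁅xx, g.θ xx⁆, xx⁆ = xx)
    (hux : ⁅uu, g.θ xx⁆ = 0)
    (hay : ⁅⁅a, g.θ a⁆, uu + xx⁆ = 0) :
    ⁅⁅a, g.θ a⁆, xx⁆ = 0 := by
  set h := ⁅a, g.θ a⁆ with hhdef
  set n := uu + xx with hndef
  have hQ : ⁅⁅n, g.θ xx⁆, n⁆ = xx := g.peirce hjneg hu hx htx hux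
  have hθh : ∀ ζ : L, ⁅h, g.θ ζ⁆ = - g.θ ⁅h, ζ⁆ := by
    intro ζ
    rw [hhdef, g.theta_lie_h, neg_neg]
  -- flip rule
  have hflip : ∀ ζ : L, ⁅h, ⁅⁅n, g.θ ζ⁆, n⁆⁆ = -⁅⁅n, g.θ ⁅h, ζ⁆⁆, n⁆ := by
    intro ζ
    rw [leibniz_lie, hay, lie_zero, add_zero, leibniz_lie, hay, zero_lie, zero_add,
      hθh, lie_neg, neg_lie]
  set π := ⁅h, xx⁆ with hπdef
  set π₁ := ⁅h, π⁆ with hπ₁def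
  set π₂ := ⁅h, π₁⁆ with hπ₂def
  have q0 : π = -⁅⁅n, g.θ π⁆, n⁆ := by
    rw [hπdef]
    conv_lhs => rw [← hQ]
    exact hflip xx
  have q1 : π₁ = ⁅⁅n, g.θ π₁⁆, n⁆ := by
    rw [hπ₁def]
    conv_lhs => rw [q0]
    rw [lie_neg, hflip π, neg_neg, ← hπ₁def]
  have q2 : π₂ = -⁅⁅n, g.θ π₂⁆, n⁆ := by
    rw [hπ₂def]
    conv_lhs => rw [q1]
    rw [hflip π₁, ← hπ₂def]
  have hc := g.cubic hj ha hta hx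
  rw [← hπdef, ← hπ₁def, ← hπ₂def] at hc
  -- hc : (π₂ + π₂) + (π₁ + π₁ + π₁) + π = 0
  -- apply Φ := fun ζ => ⁅⁅n, θ ζ⁆, n⁆ to hc
  have happ := congrArg (fun ζ => ⁅⁅n, g.θ ζ⁆, n⁆) hc
  simp only [g.θ_add, lie_add, add_lie, g.theta_zero_s16, zero_lie, lie_zero] at happ
  rw [← q1] at happ
  have hq0' : ⁅⁅n, g.θ π⁆, n⁆ = -π := (neg_eq_iff_eq_neg.mpr q0).symm
  have hq2' : ⁅⁅n, g.θ π₂⁆, n⁆ = -π₂ := (neg_eq_iff_eq_neg.mpr q2).symm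
  rw [hq0', hq2'] at happ
  -- happ : (-π₂ + -π₂) + (π₁ + π₁ + π₁) + -π = 0
  have h6 : π₁ + π₁ + π₁ + (π₁ + π₁ + π₁) = 0 := by
    have hsum : (π₂ + π₂ + (π₁ + π₁ + π₁) + π) + (-π₂ + -π₂ + (π₁ + π₁ + π₁) + -π)
        = 0 := by rw [hc, happ, add_zero]
    calc π₁ + π₁ + π₁ + (π₁ + π₁ + π₁)
        = ((π₂ + π₂) + (π₁ + π₁ + π₁) + π) + ((-π₂ + -π₂) + (π₁ + π₁ + π₁) + -π) := by abel
      _ = 0 := hsum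
  have h3 : π₁ + π₁ + π₁ = 0 := by
    have h2 := congrArg (fun x => (2:ℂ)⁻¹ • x) (show (2:ℂ) • (π₁ + π₁ + π₁) = (2:ℂ) • 0 by
      rw [smul_zero, two_smul]
      exact h6)
    simpa [smul_smul] using h2
  have hπ₁0 : π₁ = 0 := by
    refine triple_cancel' ?_
    rw [h3]; abel
  have hπ₂0 : π₂ = 0 := by rw [hπ₂def, hπ₁0, lie_zero]
  rw [hπ₁0, hπ₂0] at hc
  simpa using hc

/-- η-vanishing via the 𝔤₀ eigenvalue argument. -/
lemma eta_vanish {j : ℤ} (hj : j = -1 ∨ j = 1) {xj uj vv : L}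
    (hxj : g.P j xj = xj) (huj : g.P j uj = uj) (hvv : g.P (-j) vv = vv)
    (hjneg : -j = -1 ∨ -j = 1)
    (htx : ⁅⁅xj, g.θ xj⁆, xj⁆ = xj)
    (hty : ⁅⁅xj + uj, g.θ (xj + uj)⁆, xj + uj⁆ = xj + uj)
    (hou : ⁅uj, g.θ xj⁆ = 0)
    (hyv : ⁅⁅xj + uj, g.θ (xj + uj)⁆, vv⁆ = 0) :
    ⁅⁅xj, g.θ xj⁆, vv⁆ = 0 := by
  have hmy : g.P j (xj + uj) = xj + uj := g.mem_add hxj huj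
  set τ := ⁅xj, vv⁆ with hτdef
  have hτm : g.P 0 τ = τ := g.mem_bracket' hxj hvv (by ring)
  -- h_y = h_x + h_u
  have hhy : ⁅xj + uj, g.θ (xj + uj)⁆ = ⁅xj, g.θ xj⁆ + ⁅uj, g.θ uj⁆ := by
    rw [g.θ_add, add_lie, lie_add, lie_add, g.orth_symm hou, hou, add_zero, zero_add]
  -- ⁅h_y, xj⁆ = xj
  have hhyx : ⁅⁅xj + uj, g.θ (xj + uj)⁆, xj⁆ = xj := by
    rw [hhy, add_lie, htx, g.orth_h_lie hj huj hxj hou, add_zero]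
  -- τ is an eigenvalue-1 eigenvector of ad h_y
  have hτe : ⁅⁅xj + uj, g.θ (xj + uj)⁆, τ⁆ = τ := by
    rw [hτdef, leibniz_lie, hhyx, hyv, lie_zero, add_zero]
  have hτ0 : τ = 0 := g.zero_grade_eigen1 hj hmy hty hτm hτe
  -- conclude
  have hzv : ⁅g.θ xj, vv⁆ = 0 := g.bracket_same hjneg (g.mem_theta hxj) hvv
  rw [lie_lie, hzv, lie_zero, ← hτdef, hτ0, lie_zero, sub_zero]

end TKK
namespace TKK

variable {L : Type*} [LieRing L] [LieAlgebra ℂ L] (g : TKK L)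

/-- h of a sum of orthogonal elements splits -/
lemma h_add {a b : L} (hab : ⁅a, g.θ b⁆ = 0) (hba : ⁅b, g.θ a⁆ = 0) :
    ⁅a + b, g.θ (a + b)⁆ = ⁅a, g.θ a⁆ + ⁅b, g.θ b⁆ := by
  rw [g.θ_add, add_lie, lie_add, lie_add, hab, hba, add_zero, zero_add]

/-- converse of `us_split`: componentwise tripotency plus vanishing cross terms
give full tripotency. -/
lemma trip_of_split {z : L} (hpm : g.pm z)
    (ht1 : ⁅⁅g.P (-1) z, g.θ (g.P (-1) z)⁆, g.P (-1) z⁆ = g.P (-1) z)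
    (ht2 : ⁅⁅g.P 1 z, g.θ (g.P 1 z)⁆, g.P 1 z⁆ = g.P 1 z)
    (hc1 : ⁅⁅g.P (-1) z, g.θ (g.P (-1) z)⁆, g.P 1 z⁆ = 0)
    (hc2 : ⁅⁅g.P 1 z, g.θ (g.P 1 z)⁆, g.P (-1) z⁆ = 0) :
    g.IsTripotent z := by
  set a := g.P (-1) z with hadef
  set b := g.P 1 z with hbdef
  have ha : g.P (-1) a = a := g.mem_self _ _
  have hb : g.P 1 b = b := g.mem_self _ _
  have hd : a + b = z := g.pm_decomp hpm
  have hab : ⁅a, g.θ b⁆ = 0 :=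
    g.bracket_zero_of_out ha (g.mem_theta hb) (by norm_num) (by norm_num) (by norm_num)
  have hba : ⁅b, g.θ a⁆ = 0 :=
    g.bracket_zero_of_out hb (g.mem_theta ha) (by norm_num) (by norm_num) (by norm_num)
  show ⁅⁅z, g.θ z⁆, z⁆ = z
  conv_lhs => rw [← hd]
  rw [g.h_add hab hba, add_lie, lie_add, lie_add, ht1, ht2, hc1, hc2]
  rw [← hd]
  abel

lemma us_zero : g.Us 0 := by
  refine ⟨?_, ?_, ?_⟩
  · show g.P 0 0 = 0
    exact map_zero _
  · show ⁅⁅(0:L), g.θ 0⁆, (0:L)⁆ = 0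
    rw [lie_zero]
  · intro j _
    rw [map_zero, lie_zero]

end TKK
/-- The relation `≤` is a partial order on `𝒰_s(𝔤_{±1})`: it is reflexive,
antisymmetric and transitive. -/
theorem le_partialOrder {L : Type*} [LieRing L] [LieAlgebra ℂ L] (g : TKK L) :
    (∀ z : L, g.Us z → g.Le z z) ∧
    (∀ z w : L, g.Us z → g.Us w → g.Le z w → g.Le w z → z = w) ∧
    (∀ x y w : L, g.Us x → g.Us y → g.Us w → g.Le x y → g.Le y w → g.Le x w) := by
  refine ⟨?_, ?_, ?_⟩
  -- ### reflexivity
  · intro z _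
    refine ⟨?_, ?_⟩
    · rw [sub_self]; exact g.us_zero
    · intro j _
      rw [sub_self, map_zero, zero_lie]
  -- ### antisymmetry
  · intro z w hz hw hzw hwz
    obtain ⟨hu, hOu⟩ := hzw
    obtain ⟨hu', hOu'⟩ := hwz
    have hcomp : ∀ j : ℤ, j = -1 ∨ j = 1 → g.P j (w - z) = 0 := by
      intro j hj
      have h1 : ⁅g.P j (w - z), g.θ (g.P j z)⁆ = 0 := hOu j hj
      have h2 : ⁅g.P j (w - z), g.θ (g.P j w)⁆ = 0 := by
        have h3 := hOu' j hj
        have h4 : g.P j (z - w) = - g.P j (w - z) := by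
          rw [map_sub, map_sub]; abel
        rw [h4, neg_lie, neg_eq_zero] at h3
        exact h3
      have hθe : g.θ (g.P j (w - z)) = g.θ (g.P j w) - g.θ (g.P j z) := by
        rw [map_sub, g.theta_sub]
      have h5 : ⁅g.P j (w - z), g.θ (g.P j (w - z))⁆ = 0 := by
        rw [hθe, lie_sub, h1, h2, sub_zero]
      have h6 := hu.2.2 j hj
      rw [h5, zero_lie] at h6
      exact h6.symm
    have hd := g.pm_decomp hu.1
    rw [hcomp (-1) (Or.inl rfl), hcomp 1 (Or.inr rfl), add_zero] at hd
    have h7 : w - z = 0 := hd.symm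
    rw [sub_eq_zero] at h7
    exact h7.symm
  -- ### transitivity
  · intro x y w hx hy hw hxy hyw
    obtain ⟨hu, hOux⟩ := hxy
    obtain ⟨hv, hOvy⟩ := hyw
    set u := y - x with hudef
    set v := w - y with hvdef
    have hyxu : x + u = y := by rw [hudef]; abel
    have hw' : g.Us (v + y) := by
      have : v + y = w := by rw [hvdef]; abel
      rwa [this]
    -- cross_full for the pair (v, y)
    have CF := g.cross_full hv hy hw' hOvy
    have CFvy1 : ∀ j : ℤ, j = -1 ∨ j = 1 →
        ⁅⁅g.P j v, g.θ (g.P j v)⁆, g.P (-j) y⁆ = 0 := by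
      intro j hj
      rcases hj with rfl | rfl
      · simpa using CF.1.1
      · exact CF.2.1
    have CFvy2 : ∀ j : ℤ, j = -1 ∨ j = 1 →
        ⁅⁅g.P j y, g.θ (g.P j y)⁆, g.P (-j) v⁆ = 0 := by
      intro j hj
      rcases hj with rfl | rfl
      · simpa using CF.1.2
      · exact CF.2.2
    -- per-grade decompositions
    have Py : ∀ j : ℤ, g.P j y = g.P j x + g.P j u := by
      intro j; rw [← hyxu, map_add]
    -- Step 1 : diagonal orthogonality
    have horth_ac : ∀ j : ℤ, j = -1 ∨ j = 1 → ⁅g.P j v, g.θ (g.P j x)⁆ = 0 := by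
      intro j hj
      refine g.orth_step hj (g.mem_self j v) (g.mem_self j u) (g.mem_self j x)
        (hx.2.2 j hj) (hOux j hj) ?_
      have h1 := hOvy j hj
      rw [Py j, add_comm] at h1
      exact h1
    have horth_ab : ∀ j : ℤ, j = -1 ∨ j = 1 → ⁅g.P j v, g.θ (g.P j u)⁆ = 0 := by
      intro j hj
      refine g.orth_step' hj (g.mem_self j v) (g.mem_self j u) (g.mem_self j x)
        (hx.2.2 j hj) (hOux j hj) ?_
      have h1 := hOvy j hj
      rw [Py j, add_comm] at h1
      exact h1
    -- π : ⁅h_{v_j}, x_{-j}⁆ = 0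
    have hpi : ∀ j : ℤ, j = -1 ∨ j = 1 →
        ⁅⁅g.P j v, g.θ (g.P j v)⁆, g.P (-j) x⁆ = 0 := by
      intro j hj
      have hjneg : -j = -1 ∨ -j = 1 := by rcases hj with rfl | rfl <;> simp
      refine g.pi_vanish hj (g.mem_self j v) (hv.2.2 j hj) (g.mem_self (-j) x)
        (g.mem_self (-j) u) hjneg (hx.2.2 (-j) hjneg) (hOux (-j) hjneg) ?_
      have h1 := CFvy1 j hj
      rw [Py (-j), add_comm] at h1
      exact h1
    -- η : ⁅h_{x_j}, v_{-j}⁆ = 0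
    have heta : ∀ j : ℤ, j = -1 ∨ j = 1 →
        ⁅⁅g.P j x, g.θ (g.P j x)⁆, g.P (-j) v⁆ = 0 := by
      intro j hj
      have hjneg : -j = -1 ∨ -j = 1 := by rcases hj with rfl | rfl <;> simp
      have hty : ⁅⁅g.P j x + g.P j u, g.θ (g.P j x + g.P j u)⁆,
          g.P j x + g.P j u⁆ = g.P j x + g.P j u := by
        have := hy.2.2 j hj
        rwa [Py j] at this
      have hyv : ⁅⁅g.P j x + g.P j u, g.θ (g.P j x + g.P j u)⁆, g.P (-j) v⁆ = 0 := by
        have := CFvy2 j hj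
        rwa [Py j] at this
      exact g.eta_vanish hj (g.mem_self j x) (g.mem_self j u) (g.mem_self (-j) v)
        hjneg (hx.2.2 j hj) hty (hOux j hj) hyv
    -- cross terms between u and v
    have hcvu : ∀ j : ℤ, j = -1 ∨ j = 1 →
        ⁅⁅g.P j v, g.θ (g.P j v)⁆, g.P (-j) u⁆ = 0 := by
      intro j hj
      have h1 : g.P (-j) u = g.P (-j) y - g.P (-j) x := by
        rw [hudef, map_sub]
      rw [h1, lie_sub, CFvy1 j hj, hpi j hj, sub_zero]
    have hcuv : ∀ j : ℤ, j = -1 ∨ j = 1 →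
        ⁅⁅g.P j u, g.θ (g.P j u)⁆, g.P (-j) v⁆ = 0 := by
      intro j hj
      have hhy : ⁅g.P j y, g.θ (g.P j y)⁆
          = ⁅g.P j x, g.θ (g.P j x)⁆ + ⁅g.P j u, g.θ (g.P j u)⁆ := by
        rw [Py j]
        exact g.h_add (g.orth_symm (hOux j hj)) (hOux j hj)
      have h1 := CFvy2 j hj
      rw [hhy, add_lie, heta j hj, zero_add] at h1
      exact h1
    -- components of w - x
    have Pwx : ∀ j : ℤ, g.P j (w - x) = g.P j u + g.P j v := by
      intro j
      have : w - x = u + v := by rw [hudef, hvdef]; abel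
      rw [this, map_add]
    -- componentwise tripotency of w - x
    have hcompt : ∀ j : ℤ, j = -1 ∨ j = 1 →
        ⁅⁅g.P j (w - x), g.θ (g.P j (w - x))⁆, g.P j (w - x)⁆ = g.P j (w - x) := by
      intro j hj
      rw [Pwx j]
      exact g.trip_add hj (g.mem_self j u) (g.mem_self j v) (hu.2.2 j hj)
        (hv.2.2 j hj) (g.orth_symm (horth_ab j hj))
    -- pm of w - x
    have hpmwx : g.pm (w - x) := by
      show g.P 0 (w - x) = 0
      rw [map_sub, hw.1, hx.1, sub_zero]
    -- cross-term vanishing for w - x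
    have hcrossz : ∀ j : ℤ, j = -1 ∨ j = 1 →
        ⁅⁅g.P j (w - x), g.θ (g.P j (w - x))⁆, g.P (-j) (w - x)⁆ = 0 := by
      intro j hj
      have hjneg : -j = -1 ∨ -j = 1 := by rcases hj with rfl | rfl <;> simp
      have hsplit : ⁅g.P j (w - x), g.θ (g.P j (w - x))⁆
          = ⁅g.P j u, g.θ (g.P j u)⁆ + ⁅g.P j v, g.θ (g.P j v)⁆ := by
        rw [Pwx j]
        exact g.h_add (g.orth_symm (horth_ab j hj)) (horth_ab j hj)
      rw [hsplit, Pwx (-j), add_lie, lie_add, lie_add,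
        g.us_split u hu hj, hcuv j hj, hcvu j hj, g.us_split v hv hj]
      abel
    -- assemble Us (w - x)
    refine ⟨⟨hpmwx, ?_, hcompt⟩, ?_⟩
    · refine g.trip_of_split hpmwx (hcompt (-1) (Or.inl rfl)) (hcompt 1 (Or.inr rfl))
        ?_ ?_
      · have := hcrossz (-1) (Or.inl rfl)
        simpa using this
      · have := hcrossz 1 (Or.inr rfl)
        simpa using this
    -- Orth (w - x) x
    · intro j hj
      rw [Pwx j, add_lie, hOux j hj, horth_ac j hj, add_zero]
end
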